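/- arXiv:1104.0370 — 7 statements merged into one kernel-verified Lean document; each statement's English description precedes it below -/
import Mathlib

section
/- Let x₀ ∈ (0,∞], and let F : [0,x₀) → ℝ be a C² function with F(0) = F'(0) = 0, F'' ≥ 0 on [0,x₀), and F'(M₁) > 0 for some M₁ ∈ (0,x₀). Define v(x) = ∫₀^x 2τ √(1 + F'(τ)²) dτ, and assume v(x) → ∞ as x → x₀. Then there exist a constant C₂ > 0 and M₂ ∈ (0,x₀) such that (2v(x) - 2x²)/v(x)² ≥ C₂/v(x) for all x ∈ (M₂, x₀). -/
/-!
Convexity makes `F'` nondecreasing, so on `[M₁, x]` the weight `√(1 + F'²)` is at least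
`s = √(1 + F'(M₁)²) > 1`, while it is at least `1` everywhere; hence
`v(x) ≥ M₁² + s (x² - M₁²)`, i.e. `2v - 2x² ≥ 2 (1 - 1/s) (v - M₁²)`. Since `v → ∞`, eventually
`v ≥ 2 M₁²`, and then `2v - 2x² ≥ (1 - 1/s) v`, which is the claim with `C₂ = 1 - 1/s`.
-/

open MeasureTheory Filter Set

open Topology

theorem monotoneOn_of_hasDerivAt_nonneg {D : Set ℝ} (hD : Convex ℝ D) {f f' : ℝ → ℝ}
    (hf : ∀ x ∈ D, HasDerivAt f (f' x) x) (hf'₀ : ∀ x ∈ D, 0 ≤ f' x) : MonotoneOn f D :=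
  monotoneOn_of_hasDerivWithinAt_nonneg hD (fun x hx ↦ (hf x hx).continuousAt.continuousWithinAt)
    (fun x hx ↦ (hf x (interior_subset hx)).hasDerivWithinAt) fun x hx ↦ hf'₀ x (interior_subset hx)

theorem sq_add_mul_sub_sq_le_integral {φ : ℝ → ℝ} {m x s : ℝ} (hm : 0 ≤ m) (hmx : m ≤ x)
    (hφ : ContinuousOn φ (Icc 0 x)) (hφ₁ : ∀ τ ∈ Icc 0 m, 1 ≤ φ τ)
    (hφs : ∀ τ ∈ Icc m x, s ≤ φ τ) :
    m ^ 2 + s * (x ^ 2 - m ^ 2) ≤ ∫ τ in 0..x, 2 * τ * φ τ := by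
  have hcont : ContinuousOn (fun τ ↦ 2 * τ * φ τ) (Icc 0 x) :=
    (continuousOn_const.mul continuousOn_id).mul hφ
  have h₀ : IntervalIntegrable (fun τ ↦ 2 * τ * φ τ) volume 0 m :=
    (hcont.mono (Icc_subset_Icc_right hmx)).intervalIntegrable_of_Icc hm
  have h₁ : IntervalIntegrable (fun τ ↦ 2 * τ * φ τ) volume m x :=
    (hcont.mono (Icc_subset_Icc_left hm)).intervalIntegrable_of_Icc hmx
  have hlow : ∫ τ in 0..m, 2 * τ = m ^ 2 := by
    rw [intervalIntegral.integral_const_mul, integral_id]; ring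
  have hup : ∫ τ in m..x, 2 * τ * s = s * (x ^ 2 - m ^ 2) := by
    simp only [mul_comm _ s, ← mul_assoc]
    rw [intervalIntegral.integral_const_mul, integral_id]; ring
  rw [← intervalIntegral.integral_add_adjacent_intervals h₀ h₁, ← hup, ← hlow]
  gcongr ?_ + ?_
  · refine intervalIntegral.integral_mono_on hm
      ((continuous_const_mul 2).intervalIntegrable _ _) h₀ fun τ hτ ↦ ?_
    exact le_mul_of_one_le_right (by linarith [hτ.1]) (hφ₁ τ hτ)
  · refine intervalIntegral.integral_mono_on hmx
      (by apply Continuous.intervalIntegrable; fun_prop) h₁ fun τ hτ ↦ ?_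
    exact mul_le_mul_of_nonneg_left (hφs τ hτ) (by linarith [hτ.1])

theorem sq_add_mul_sub_sq_le_integral_sqrt_one_add_sq {g : ℝ → ℝ} {m x : ℝ} (hm : 0 ≤ m)
    (hmx : m ≤ x) (hg : ContinuousOn g (Icc 0 x)) (hmono : MonotoneOn g (Icc m x))
    (hgm : 0 ≤ g m) :
    m ^ 2 + √(1 + g m ^ 2) * (x ^ 2 - m ^ 2) ≤ ∫ τ in 0..x, 2 * τ * √(1 + g τ ^ 2) := by
  refine sq_add_mul_sub_sq_le_integral hm hmx (by fun_prop)
    (fun τ _ ↦ Real.one_le_sqrt.mpr (le_add_of_nonneg_right (sq_nonneg _))) fun τ hτ ↦ ?_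
  have : g m ≤ g τ := hmono ⟨le_rfl, hmx⟩ hτ hτ.1
  gcongr

theorem EReal.exists_forall_of_eventually_comap_coe_nhdsLT {x₀ : EReal} {a : ℝ}
    (ha : (a : EReal) < x₀) {p : ℝ → Prop}
    (h : ∀ᶠ x in comap (fun x : ℝ ↦ (x : EReal)) (𝓝[<] x₀), p x) :
    ∃ r : ℝ, a < r ∧ (r : EReal) < x₀ ∧ ∀ x : ℝ, r < x → (x : EReal) < x₀ → p x := by
  obtain ⟨T, hT, hTp⟩ := mem_comap.mp h
  obtain ⟨b, hbx₀, hbT⟩ := (nhdsLT_basis_of_exists_lt ⟨_, ha⟩).mem_iff.mp hT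
  obtain ⟨r, hr, hrx₀⟩ := EReal.exists_between_coe_real (max_lt hbx₀ ha)
  refine ⟨r, EReal.coe_lt_coe_iff.mp ((le_max_right _ _).trans_lt hr), hrx₀,
    fun x hrx hxx₀ ↦ hTp (hbT ⟨?_, hxx₀⟩)⟩
  exact ((le_max_left _ _).trans_lt hr).trans (EReal.coe_lt_coe_iff.mpr hrx)

theorem div_le_two_mul_sub_two_mul_sq_div_sq {m s v x : ℝ} (hm : 0 < m) (hs : 1 < s)
    (hvm : 2 * m ^ 2 ≤ v) (hvx : m ^ 2 + s * (x ^ 2 - m ^ 2) ≤ v) :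
    (s - 1) / s / v ≤ (2 * v - 2 * x ^ 2) / v ^ 2 := by
  have hv : 0 < v := by nlinarith
  rw [div_div, div_le_div_iff₀ (by positivity) (by positivity)]
  nlinarith [mul_nonneg (by linarith : (0 : ℝ) ≤ s - 1) (by linarith : (0 : ℝ) ≤ v - 2 * m ^ 2)]

theorem stmt6_general (x₀ : EReal)
    (F' F'' : ℝ → ℝ)
    (hF'' : ∀ x : ℝ, 0 ≤ x → (x : EReal) < x₀ → HasDerivAt F' (F'' x) x)
    (hconv : ∀ x : ℝ, 0 ≤ x → (x : EReal) < x₀ → 0 ≤ F'' x)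
    (M₁ : ℝ) (hM₁ : 0 < M₁) (hM₁x₀ : (M₁ : EReal) < x₀) (hF'M₁ : 0 < F' M₁)
    (v : ℝ → ℝ) (hv : ∀ x, v x = ∫ τ in (0 : ℝ)..x, 2 * τ * Real.sqrt (1 + F' τ ^ 2))
    (hvlim : Tendsto v
      (Filter.comap (fun x : ℝ => (x : EReal)) (nhdsWithin x₀ (Iio x₀))) atTop) :
    ∃ C₂ > (0 : ℝ), ∃ M₂ : ℝ, 0 < M₂ ∧ (M₂ : EReal) < x₀ ∧
      ∀ x : ℝ, M₂ < x → (x : EReal) < x₀ →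
        C₂ / v x ≤ (2 * v x - 2 * x ^ 2) / (v x) ^ 2 := by
  set D := {x : ℝ | 0 ≤ x ∧ (x : EReal) < x₀}
  have hD : Convex ℝ D :=
    (ordConnected_Ici.inter (ordConnected_Iio.preimage_mono EReal.coe_strictMono.monotone)).convex
  have hmono : MonotoneOn F' D :=
    monotoneOn_of_hasDerivAt_nonneg hD (fun x hx ↦ hF'' x hx.1 hx.2) fun x hx ↦ hconv x hx.1 hx.2
  set s := √(1 + F' M₁ ^ 2)
  have hs : 1 < s := (Real.lt_sqrt zero_le_one).mpr (by nlinarith)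
  obtain ⟨r, hM₁r, hrx₀, hr⟩ := EReal.exists_forall_of_eventually_comap_coe_nhdsLT hM₁x₀
    (hvlim.eventually (eventually_ge_atTop (2 * M₁ ^ 2)))
  refine ⟨(s - 1) / s, div_pos (by linarith) (by linarith), r, hM₁.trans hM₁r, hrx₀,
    fun x hrx hxx₀ ↦ div_le_two_mul_sub_two_mul_sq_div_sq hM₁ hs (hr x hrx hxx₀) ?_⟩
  have hIcc : Icc 0 x ⊆ D := fun τ hτ ↦ ⟨hτ.1, (EReal.coe_le_coe_iff.mpr hτ.2).trans_lt hxx₀⟩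
  rw [hv]
  exact sq_add_mul_sub_sq_le_integral_sqrt_one_add_sq hM₁.le (hM₁r.trans hrx).le
    (fun τ hτ ↦ (hF'' τ (hIcc hτ).1 (hIcc hτ).2).continuousAt.continuousWithinAt)
    (hmono.mono ((Icc_subset_Icc_left hM₁.le).trans hIcc)) hF'M₁.le

/-- Let `x₀ ∈ (0,∞]` (as an extended real), and `F` a `C²` function on `[0,x₀)` with
`F(0) = F'(0) = 0`, `F'' ≥ 0`, `F'(M₁) > 0` for some `M₁ ∈ (0,x₀)`. If
`v(x) = ∫₀^x 2τ√(1+F'(τ)²) dτ → ∞` as `x → x₀⁻`, then there are `C₂ > 0` and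
`M₂ ∈ (0,x₀)` with `(2v - 2x²)/v² ≥ C₂/v` on `(M₂, x₀)`. -/
theorem stmt6 (x₀ : EReal) (hx₀ : 0 < x₀)
    (F F' F'' : ℝ → ℝ)
    (hF' : ∀ x : ℝ, 0 ≤ x → (x : EReal) < x₀ → HasDerivAt F (F' x) x)
    (hF'' : ∀ x : ℝ, 0 ≤ x → (x : EReal) < x₀ → HasDerivAt F' (F'' x) x)
    (hF''cont : ContinuousOn F'' {x : ℝ | 0 ≤ x ∧ (x : EReal) < x₀})
    (hF0 : F 0 = 0) (hF'0 : F' 0 = 0)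
    (hconv : ∀ x : ℝ, 0 ≤ x → (x : EReal) < x₀ → 0 ≤ F'' x)
    (M₁ : ℝ) (hM₁ : 0 < M₁) (hM₁x₀ : (M₁ : EReal) < x₀) (hF'M₁ : 0 < F' M₁)
    (v : ℝ → ℝ) (hv : ∀ x, v x = ∫ τ in (0 : ℝ)..x, 2 * τ * Real.sqrt (1 + F' τ ^ 2))
    (hvlim : Tendsto v
      (Filter.comap (fun x : ℝ => (x : EReal)) (nhdsWithin x₀ (Iio x₀))) atTop) :
    ∃ C₂ > (0 : ℝ), ∃ M₂ : ℝ, 0 < M₂ ∧ (M₂ : EReal) < x₀ ∧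
      ∀ x : ℝ, M₂ < x → (x : EReal) < x₀ →
        C₂ / v x ≤ (2 * v x - 2 * x ^ 2) / (v x) ^ 2 :=
  stmt6_general x₀ F' F'' hF'' hconv M₁ hM₁ hM₁x₀ hF'M₁ v hv hvlim
end

section
/- Let x₀ ∈ (0,∞], and let F : [0,x₀) → ℝ be a C² function with F(0) = F'(0) = 0, F'' ≥ 0 on [0,x₀), and F'(M₁) > 0 for some M₁ ∈ (0,x₀). Define v(x) = ∫₀^x 2τ √(1 + F'(τ)²) dτ and C(x) = (2v(x) - 2x²)/v(x)² for x > 0, and assume v(x) → ∞ as x → x₀. Then for every integer n ≥ 2, ∫_{M₁}^x C(τ)ⁿ · n v(τ)^{n-1} v'(τ) dτ → ∞ as x → x₀. -/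
open MeasureTheory Filter Set Real Topology

/-!
Convexity makes `F'` nondecreasing, so for `τ ≥ M₁` the density `v' = 2τ√(1 + F'²)` is at least
`2τ u₁` with `u₁ = √(1 + F'(M₁)²) > 1`. Hence `v(x) - x²` grows at least like `δ v` with
`δ = 1 - 1/u₁ > 0`, which gives `C ≥ δ / v` as soon as `v ≥ 2 v(M₁)`. From there on the integrand
`Cⁿ (vⁿ)'` dominates `n δⁿ v'/v = n δⁿ (log v)'`, and `log v → ∞`.
-/

noncomputable def volumeDensity (F' : ℝ → ℝ) (τ : ℝ) : ℝ := 2 * τ * √(1 + F' τ ^ 2)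

noncomputable def volumeFunction (F' : ℝ → ℝ) (x : ℝ) : ℝ :=
  ∫ τ in (0 : ℝ)..x, volumeDensity F' τ

noncomputable def curvatureC (F' : ℝ → ℝ) (x : ℝ) : ℝ :=
  (2 * volumeFunction F' x - 2 * x ^ 2) / volumeFunction F' x ^ 2

lemma two_mul_le_volumeDensity (F' : ℝ → ℝ) {τ : ℝ} (hτ : 0 ≤ τ) :
    2 * τ ≤ volumeDensity F' τ := by
  have : 1 ≤ √(1 + F' τ ^ 2) := Real.one_le_sqrt.2 (by nlinarith [sq_nonneg (F' τ)])
  unfold volumeDensity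
  nlinarith

lemma continuousAt_volumeDensity {F' : ℝ → ℝ} {τ : ℝ} (h : ContinuousAt F' τ) :
    ContinuousAt (volumeDensity F') τ := by
  unfold volumeDensity
  fun_prop

lemma continuousAt_curvatureC {F' : ℝ → ℝ} {τ : ℝ} (hv : ContinuousAt (volumeFunction F') τ)
    (hv₀ : volumeFunction F' τ ≠ 0) : ContinuousAt (curvatureC F') τ := by
  unfold curvatureC
  fun_prop (disch := exact pow_ne_zero 2 hv₀)

lemma one_sub_one_div_sqrt_one_add_sq_pos {a : ℝ} (ha : a ≠ 0) : 0 < 1 - 1 / √(1 + a ^ 2) := by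
  have : 1 < √(1 + a ^ 2) := (Real.lt_sqrt zero_le_one).2 (by nlinarith [sq_pos_of_ne_zero ha])
  exact sub_pos.2 ((div_lt_one (by positivity)).2 this)

lemma le_of_forall_hasDerivAt_nonneg {g g' : ℝ → ℝ} {a b : ℝ} (hab : a ≤ b)
    (hg : ∀ x ∈ Icc a b, HasDerivAt g (g' x) x) (hg' : ∀ x ∈ Icc a b, 0 ≤ g' x) :
    g a ≤ g b :=
  monotoneOn_of_hasDerivWithinAt_nonneg (convex_Icc a b)
    (fun x hx => (hg x hx).continuousAt.continuousWithinAt)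
    (fun x hx => (hg x (interior_subset hx)).hasDerivWithinAt)
    (fun x hx => hg' x (interior_subset hx)) (left_mem_Icc.2 hab) (right_mem_Icc.2 hab) hab

lemma hasDerivAt_integral_of_forall_continuousAt {S : ℝ → ℝ} {s : Set ℝ} {a b : ℝ}
    (hS : ∀ x ∈ s, ContinuousAt S x) (hab : uIcc a b ⊆ s) (hb : s ∈ 𝓝 b) :
    HasDerivAt (fun x => ∫ τ in a..x, S τ) (S b) b :=
  intervalIntegral.integral_hasDerivAt_right
    (continuousOn_of_forall_continuousAt fun x hx => hS x (hab hx)).intervalIntegrable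
    (ContinuousAt.stronglyMeasurableAtFilter isOpen_interior
      (fun x hx => hS x (interior_subset hx)) b (mem_interior_iff_mem_nhds.2 hb))
    (hS b (hab right_mem_uIcc))

lemma mul_log_sub_le_integral {f v v' : ℝ → ℝ} {a b x c : ℝ} (hab : a ≤ b) (hbx : b ≤ x)
    (hf : ContinuousOn f (Icc a x)) (hf₀ : ∀ τ ∈ Icc a b, 0 ≤ f τ)
    (hv : ∀ τ ∈ Icc b x, HasDerivAt v (v' τ) τ) (hv₀ : ∀ τ ∈ Icc b x, 0 < v τ)
    (hle : ∀ τ ∈ Icc b x, c * (v' τ / v τ) ≤ f τ) :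
    c * (log (v x) - log (v b)) ≤ ∫ τ in a..x, f τ := by
  have hlog : ∀ τ ∈ Icc b x, HasDerivAt (fun y => c * log (v y)) (c * (v' τ / v τ)) τ :=
    fun τ hτ => ((hv τ hτ).log (hv₀ τ hτ).ne').const_mul c
  have hfbx : ContinuousOn f (Icc b x) := hf.mono (Icc_subset_Icc_left hab)
  have hgrowth : c * log (v x) - c * log (v b) ≤ ∫ τ in b..x, f τ :=
    intervalIntegral.sub_le_integral_of_hasDeriv_right_of_le hbx
      (fun τ hτ => (hlog τ hτ).continuousAt.continuousWithinAt)
      (fun τ hτ => (hlog τ (Ioo_subset_Icc_self hτ)).hasDerivWithinAt) hfbx.integrableOn_Icc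
      (fun τ hτ => hle τ (Ioo_subset_Icc_self hτ))
  have hinitial : 0 ≤ ∫ τ in a..b, f τ := intervalIntegral.integral_nonneg hab hf₀
  rw [← intervalIntegral.integral_add_adjacent_intervals
    ((hf.mono (Icc_subset_Icc_right hbx)).intervalIntegrable_of_Icc hab)
    (hfbx.intervalIntegrable_of_Icc hbx)]
  linarith

lemma mul_pow_mul_div_le_pow_mul {δ C V V' : ℝ} (n : ℕ) (hδ : 0 ≤ δ) (hV : 0 < V)
    (hV' : 0 ≤ V') (hC : δ / V ≤ C) :
    n * δ ^ n * (V' / V) ≤ C ^ n * (n * V ^ (n - 1) * V') := by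
  rcases n with _ | m
  · simp
  rw [Nat.add_sub_cancel]
  calc (↑(m + 1) : ℝ) * δ ^ (m + 1) * (V' / V)
      = (δ / V) ^ (m + 1) * (↑(m + 1) * V ^ m * V') := by
        rw [div_pow]
        field_simp
        ring
    _ ≤ C ^ (m + 1) * (↑(m + 1) * V ^ m * V') := by gcongr

lemma coe_lt_of_le_of_coe_lt {a b : ℝ} {x₀ : EReal} (hab : a ≤ b) (hb : (b : EReal) < x₀) :
    (a : EReal) < x₀ :=
  (EReal.coe_le_coe_iff.2 hab).trans_lt hb

lemma eventually_lt_and_coe_lt {x₀ : EReal} {c : ℝ} (hc : (c : EReal) < x₀) :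
    ∀ᶠ x : ℝ in comap (↑) (𝓝[<] x₀), c < x ∧ (x : EReal) < x₀ := by
  refine eventually_comap.2 ?_
  filter_upwards [self_mem_nhdsWithin, mem_nhdsWithin_of_mem_nhds (Ioi_mem_nhds hc)]
    with y hlt hgt x hx
  subst hx
  exact ⟨EReal.coe_lt_coe_iff.1 hgt, hlt⟩

section

variable {x₀ : EReal} {F' F'' : ℝ → ℝ}

lemma hasDerivAt_volumeFunction
    (hF'' : ∀ x : ℝ, 0 ≤ x → (x : EReal) < x₀ → HasDerivAt F' (F'' x) x)
    {x : ℝ} (hx : 0 < x) (hxx₀ : (x : EReal) < x₀) :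
    HasDerivAt (volumeFunction F') (volumeDensity F' x) x := by
  refine hasDerivAt_integral_of_forall_continuousAt (s := Ici 0 ∩ {y : ℝ | (y : EReal) < x₀})
    (fun y hy => continuousAt_volumeDensity (hF'' y hy.1 hy.2).continuousAt) ?_ ?_
  · rw [uIcc_of_le hx.le]
    exact fun y hy => ⟨hy.1, coe_lt_of_le_of_coe_lt hy.2 hxx₀⟩
  · exact inter_mem (Ici_mem_nhds hx)
      ((isOpen_Iio.preimage continuous_coe_real_ereal).mem_nhds hxx₀)

lemma sq_le_volumeFunction
    (hF'' : ∀ x : ℝ, 0 ≤ x → (x : EReal) < x₀ → HasDerivAt F' (F'' x) x)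
    {x : ℝ} (hx : 0 ≤ x) (hxx₀ : (x : EReal) < x₀) :
    x ^ 2 ≤ volumeFunction F' x := by
  have hcont : ContinuousOn (volumeDensity F') (Icc 0 x) := fun τ hτ =>
    (continuousAt_volumeDensity
      (hF'' τ hτ.1 (coe_lt_of_le_of_coe_lt hτ.2 hxx₀)).continuousAt).continuousWithinAt
  calc x ^ 2 = ∫ τ in (0 : ℝ)..x, 2 * τ := by
        rw [intervalIntegral.integral_const_mul, integral_id]
        ring
    _ ≤ volumeFunction F' x :=
      intervalIntegral.integral_mono_on hx ((continuous_const_mul 2).intervalIntegrable 0 x)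
        (hcont.intervalIntegrable_of_Icc hx)
        fun τ hτ => two_mul_le_volumeDensity F' hτ.1

lemma mul_sub_le_volumeFunction_sub_sq
    (hF'' : ∀ x : ℝ, 0 ≤ x → (x : EReal) < x₀ → HasDerivAt F' (F'' x) x)
    (hconv : ∀ x : ℝ, 0 ≤ x → (x : EReal) < x₀ → 0 ≤ F'' x)
    {M₁ x : ℝ} (hM₁ : 0 < M₁) (hF'M₁ : 0 ≤ F' M₁) (hx : M₁ ≤ x) (hxx₀ : (x : EReal) < x₀) :
    (1 - 1 / √(1 + F' M₁ ^ 2)) * (volumeFunction F' x - volumeFunction F' M₁) ≤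
      volumeFunction F' x - x ^ 2 := by
  set u₁ := √(1 + F' M₁ ^ 2)
  have hdom : ∀ τ ∈ Icc M₁ x, 0 < τ ∧ (τ : EReal) < x₀ := fun τ hτ =>
    ⟨hM₁.trans_le hτ.1, coe_lt_of_le_of_coe_lt hτ.2 hxx₀⟩
  have hF'mono : ∀ τ ∈ Icc M₁ x, F' M₁ ≤ F' τ := fun τ hτ =>
    le_of_forall_hasDerivAt_nonneg hτ.1
      (fun y hy => hF'' y (hM₁.le.trans hy.1) (hdom y ⟨hy.1, hy.2.trans hτ.2⟩).2)
      (fun y hy => hconv y (hM₁.le.trans hy.1) (hdom y ⟨hy.1, hy.2.trans hτ.2⟩).2)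
  have hgrowth : ∀ τ ∈ Icc M₁ x,
      0 ≤ volumeDensity F' τ - 2 * τ - (1 - 1 / u₁) * volumeDensity F' τ := by
    intro τ hτ
    have hu₁ : 0 < u₁ := Real.sqrt_pos.2 (by positivity)
    have hu : u₁ ≤ √(1 + F' τ ^ 2) :=
      Real.sqrt_le_sqrt (by nlinarith [hF'mono τ hτ])
    have : volumeDensity F' τ - 2 * τ - (1 - 1 / u₁) * volumeDensity F' τ =
        2 * τ * (√(1 + F' τ ^ 2) - u₁) / u₁ := by
      unfold volumeDensity
      field_simp
      ring
    rw [this]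
    have := (hdom τ hτ).1
    have : 0 ≤ √(1 + F' τ ^ 2) - u₁ := by linarith
    positivity
  have hmono := le_of_forall_hasDerivAt_nonneg
    (g := fun y => volumeFunction F' y - y ^ 2 - (1 - 1 / u₁) * volumeFunction F' y) hx
    (fun τ hτ => by
      have hv := hasDerivAt_volumeFunction hF'' (hdom τ hτ).1 (hdom τ hτ).2
      exact ((hv.sub (hasDerivAt_pow 2 τ)).sub (hv.const_mul (1 - 1 / u₁))).congr_deriv
        (by norm_num))
    hgrowth
  have := sq_le_volumeFunction hF'' hM₁.le (hdom M₁ (left_mem_Icc.2 hx)).2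
  linarith

lemma div_le_curvatureC
    (hF'' : ∀ x : ℝ, 0 ≤ x → (x : EReal) < x₀ → HasDerivAt F' (F'' x) x)
    (hconv : ∀ x : ℝ, 0 ≤ x → (x : EReal) < x₀ → 0 ≤ F'' x)
    {M₁ x : ℝ} (hM₁ : 0 < M₁) (hF'M₁ : 0 < F' M₁) (hx : M₁ ≤ x) (hxx₀ : (x : EReal) < x₀)
    (hvx : 2 * volumeFunction F' M₁ ≤ volumeFunction F' x) :
    (1 - 1 / √(1 + F' M₁ ^ 2)) / volumeFunction F' x ≤ curvatureC F' x := by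
  have hδ := (one_sub_one_div_sqrt_one_add_sq_pos hF'M₁.ne').le
  have hv : 0 < volumeFunction F' x := (pow_pos (hM₁.trans_le hx) 2).trans_le
    (sq_le_volumeFunction hF'' (hM₁.le.trans hx) hxx₀)
  have := mul_sub_le_volumeFunction_sub_sq hF'' hconv hM₁ hF'M₁.le hx hxx₀
  rw [curvatureC, div_le_div_iff₀ hv (by positivity)]
  nlinarith [mul_le_mul_of_nonneg_left hvx hδ]

lemma mul_log_sub_le_integral_curvatureC
    (hF'' : ∀ x : ℝ, 0 ≤ x → (x : EReal) < x₀ → HasDerivAt F' (F'' x) x)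
    (hconv : ∀ x : ℝ, 0 ≤ x → (x : EReal) < x₀ → 0 ≤ F'' x)
    {M₁ b x : ℝ} (n : ℕ) (hM₁ : 0 < M₁) (hF'M₁ : 0 < F' M₁) (hb : M₁ ≤ b) (hbx : b ≤ x)
    (hxx₀ : (x : EReal) < x₀) (hvb : 2 * volumeFunction F' M₁ ≤ volumeFunction F' b) :
    n * (1 - 1 / √(1 + F' M₁ ^ 2)) ^ n *
        (log (volumeFunction F' x) - log (volumeFunction F' b)) ≤
      ∫ τ in M₁..x, curvatureC F' τ ^ n *
        (n * volumeFunction F' τ ^ (n - 1) * deriv (volumeFunction F') τ) := by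
  have hdom : ∀ τ ∈ Icc M₁ x, 0 < τ ∧ (τ : EReal) < x₀ := fun τ hτ =>
    ⟨hM₁.trans_le hτ.1, coe_lt_of_le_of_coe_lt hτ.2 hxx₀⟩
  have hv : ∀ τ ∈ Icc M₁ x, HasDerivAt (volumeFunction F') (volumeDensity F' τ) τ := fun τ hτ =>
    hasDerivAt_volumeFunction hF'' (hdom τ hτ).1 (hdom τ hτ).2
  have hsq : ∀ τ ∈ Icc M₁ x, τ ^ 2 ≤ volumeFunction F' τ := fun τ hτ =>
    sq_le_volumeFunction hF'' (hdom τ hτ).1.le (hdom τ hτ).2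
  have hvpos : ∀ τ ∈ Icc M₁ x, 0 < volumeFunction F' τ := fun τ hτ =>
    (pow_pos (hdom τ hτ).1 2).trans_le (hsq τ hτ)
  have hS : ∀ τ ∈ Icc M₁ x, 0 ≤ volumeDensity F' τ := fun τ hτ =>
    (mul_nonneg zero_le_two (hdom τ hτ).1.le).trans (two_mul_le_volumeDensity F' (hdom τ hτ).1.le)
  have hδ := (one_sub_one_div_sqrt_one_add_sq_pos hF'M₁.ne').le
  rw [intervalIntegral.integral_congr (g := fun τ =>
      curvatureC F' τ ^ n * (n * volumeFunction F' τ ^ (n - 1) * volumeDensity F' τ)) fun τ hτ => by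
    rw [(hv τ (uIcc_of_le (hb.trans hbx) ▸ hτ)).deriv]]
  refine mul_log_sub_le_integral hb hbx (fun τ hτ => ?_) (fun τ hτ => ?_)
    (fun τ hτ => hv τ ⟨hb.trans hτ.1, hτ.2⟩) (fun τ hτ => hvpos τ ⟨hb.trans hτ.1, hτ.2⟩)
    (fun τ hτ => ?_)
  · have hvc := (hv τ hτ).continuousAt
    have hSc := continuousAt_volumeDensity (hF'' τ (hdom τ hτ).1.le (hdom τ hτ).2).continuousAt
    have hCc := continuousAt_curvatureC hvc (hvpos τ hτ).ne'
    exact ContinuousAt.continuousWithinAt (by fun_prop)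
  · have hτ' : τ ∈ Icc M₁ x := ⟨hτ.1, hτ.2.trans hbx⟩
    have hC : 0 ≤ curvatureC F' τ := div_nonneg (by linarith [hsq τ hτ']) (sq_nonneg _)
    have := hvpos τ hτ'
    have := hS τ hτ'
    positivity
  · have hτ' : τ ∈ Icc M₁ x := ⟨hb.trans hτ.1, hτ.2⟩
    have hvτ : volumeFunction F' b ≤ volumeFunction F' τ :=
      le_of_forall_hasDerivAt_nonneg hτ.1 (fun y hy => hv y ⟨hb.trans hy.1, hy.2.trans hτ.2⟩)
        (fun y hy => hS y ⟨hb.trans hy.1, hy.2.trans hτ.2⟩)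
    exact mul_pow_mul_div_le_pow_mul n hδ (hvpos τ hτ') (hS τ hτ')
      (div_le_curvatureC hF'' hconv hM₁ hF'M₁ hτ'.1 (hdom τ hτ').2 (hvb.trans hvτ))

end

theorem stmt7_general (x₀ : EReal)
    (F' F'' : ℝ → ℝ)
    (hF'' : ∀ x : ℝ, 0 ≤ x → (x : EReal) < x₀ → HasDerivAt F' (F'' x) x)
    (hconv : ∀ x : ℝ, 0 ≤ x → (x : EReal) < x₀ → 0 ≤ F'' x)
    (M₁ : ℝ) (hM₁ : 0 < M₁) (hM₁x₀ : (M₁ : EReal) < x₀) (hF'M₁ : 0 < F' M₁)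
    (v : ℝ → ℝ) (hv : ∀ x, v x = ∫ τ in (0 : ℝ)..x, 2 * τ * Real.sqrt (1 + F' τ ^ 2))
    (C : ℝ → ℝ) (hC : ∀ x, C x = (2 * v x - 2 * x ^ 2) / (v x) ^ 2)
    (hvlim : Tendsto v
      (Filter.comap (fun x : ℝ => (x : EReal)) (nhdsWithin x₀ (Iio x₀))) atTop) :
    ∀ n : ℕ, 2 ≤ n →
      Tendsto (fun x : ℝ => ∫ τ in M₁..x, C τ ^ n * ((n : ℝ) * v τ ^ (n - 1) * deriv v τ))
        (Filter.comap (fun x : ℝ => (x : EReal)) (nhdsWithin x₀ (Iio x₀))) atTop := by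
  intro n hn
  obtain rfl : v = volumeFunction F' := funext hv
  obtain rfl : C = curvatureC F' := funext hC
  set L := comap (fun x : ℝ => (x : EReal)) (𝓝[<] x₀)
  rcases eq_or_neBot L with hL | hL
  · rw [hL]
    exact tendsto_bot
  obtain ⟨b, hvb, hM₁b, hbx₀⟩ := ((hvlim.eventually_ge_atTop (2 * volumeFunction F' M₁)).and
    (eventually_lt_and_coe_lt hM₁x₀)).exists
  have hδ := one_sub_one_div_sqrt_one_add_sq_pos hF'M₁.ne'
  have hn : (0 : ℝ) < n := by exact_mod_cast (by omega : 0 < n)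
  refine tendsto_atTop_mono' L ?_ <| Tendsto.const_mul_atTop (mul_pos hn (pow_pos hδ n)) <|
    tendsto_atTop_add_const_right L (-log (volumeFunction F' b)) (tendsto_log_atTop.comp hvlim)
  filter_upwards [eventually_lt_and_coe_lt hbx₀] with x ⟨hbx, hxx₀⟩
  simpa only [Function.comp_def, sub_eq_add_neg] using
    mul_log_sub_le_integral_curvatureC hF'' hconv n hM₁ hF'M₁ hM₁b.le hbx.le hxx₀ hvb

/-- Let `x₀ ∈ (0,∞]`, `F` a `C²` function on `[0,x₀)` with `F(0) = F'(0) = 0`, `F'' ≥ 0`,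
`F'(M₁) > 0` for some `M₁ ∈ (0,x₀)`, and set `v(x) = ∫₀^x 2τ√(1+F'(τ)²) dτ` and
`C(x) = (2v(x) - 2x²)/v(x)²`; assume `v(x) → ∞` as `x → x₀⁻`. Then for every `n ≥ 2`,
`∫_{M₁}^x C(τ)ⁿ · n v(τ)^{n-1} v'(τ) dτ → ∞` as `x → x₀⁻`. -/
theorem stmt7 (x₀ : EReal) (hx₀ : 0 < x₀)
    (F F' F'' : ℝ → ℝ)
    (hF' : ∀ x : ℝ, 0 ≤ x → (x : EReal) < x₀ → HasDerivAt F (F' x) x)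
    (hF'' : ∀ x : ℝ, 0 ≤ x → (x : EReal) < x₀ → HasDerivAt F' (F'' x) x)
    (hF''cont : ContinuousOn F'' {x : ℝ | 0 ≤ x ∧ (x : EReal) < x₀})
    (hF0 : F 0 = 0) (hF'0 : F' 0 = 0)
    (hconv : ∀ x : ℝ, 0 ≤ x → (x : EReal) < x₀ → 0 ≤ F'' x)
    (M₁ : ℝ) (hM₁ : 0 < M₁) (hM₁x₀ : (M₁ : EReal) < x₀) (hF'M₁ : 0 < F' M₁)
    (v : ℝ → ℝ) (hv : ∀ x, v x = ∫ τ in (0 : ℝ)..x, 2 * τ * Real.sqrt (1 + F' τ ^ 2))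
    (C : ℝ → ℝ) (hC : ∀ x, C x = (2 * v x - 2 * x ^ 2) / (v x) ^ 2)
    (hvlim : Tendsto v
      (Filter.comap (fun x : ℝ => (x : EReal)) (nhdsWithin x₀ (Iio x₀))) atTop) :
    ∀ n : ℕ, 2 ≤ n →
      Tendsto (fun x : ℝ => ∫ τ in M₁..x, C τ ^ n * ((n : ℝ) * v τ ^ (n - 1) * deriv v τ))
        (Filter.comap (fun x : ℝ => (x : EReal)) (nhdsWithin x₀ (Iio x₀))) atTop :=
  stmt7_general x₀ F' F'' hF'' hconv M₁ hM₁ hM₁x₀ hF'M₁ v hv C hC hvlim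
end

section
/- Define δ̄ : [0,∞) → ℝ by δ̄(x) = l if x ∈ [l, l + l^{-5/2}] for some integer l ≥ 2, and δ̄(x) = 0 otherwise. Then ∫₀^∞ δ̄(x) dx < ∞, and for all integers n, k with 2 ≤ k < n, lim_{x→∞} x^{-(2n-2k)} ∫₀^x δ̄(τ)² τ^{2(n-k)+1} dτ = ∞. -/
open MeasureTheory Filter Set

/-!
The plateaus `[l, l + l^{-q}]` of `δ̄` carry mass `l · l^{-q} = l^{1-q}`, summable for `q > 2`.
For the divergence, the plateau at `L = ⌊x⌋₊ - 1 ≥ x / 2` alone contributes at least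
`L^{-q} · L² · L^{p+1}` to `∫₀^x δ̄² τ^{p+1}`, which exceeds `x^p` by a factor of order `x^{3-q}`,
unbounded for `q < 3`. The theorem is the case `q = 5/2`, `p = 2(n - k)`.
-/

noncomputable def plateau (q : ℝ) (l : ℕ) : Set ℝ :=
  if 2 ≤ l then Icc (l : ℝ) (l + (l : ℝ) ^ (-q)) else ∅

/-- The paper's `δ̄`, with `5/2` replaced by `q`. Its value `l` on the `l`-th plateau is written
`⌊x⌋₊`, which is correct as the plateaus have width `< 1`. -/
noncomputable def stepProfile (q : ℝ) : ℝ → ℝ :=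
  (⋃ l, plateau q l).indicator fun x => (⌊x⌋₊ : ℝ)

section StepProfile

variable {q : ℝ} {l : ℕ} {x : ℝ}

lemma mem_plateau : x ∈ plateau q l ↔ 2 ≤ l ∧ x ∈ Icc (l : ℝ) (l + (l : ℝ) ^ (-q)) := by
  unfold plateau; split_ifs with hl <;> simp [hl]

lemma isCompact_plateau (q : ℝ) (l : ℕ) : IsCompact (plateau q l) := by
  unfold plateau; split_ifs
  exacts [isCompact_Icc, isCompact_empty]

lemma measurableSet_plateau (q : ℝ) (l : ℕ) : MeasurableSet (plateau q l) :=
  (isCompact_plateau q l).isClosed.measurableSet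

lemma volume_real_plateau (q : ℝ) (l : ℕ) :
    volume.real (plateau q l) = if 2 ≤ l then (l : ℝ) ^ (-q) else 0 := by
  unfold plateau
  split_ifs
  · rw [Real.volume_real_Icc_of_le (by simp [Real.rpow_nonneg]), add_sub_cancel_left]
  · simp

lemma natCast_rpow_neg_lt_one (hq : 0 < q) (hl : 2 ≤ l) : (l : ℝ) ^ (-q) < 1 :=
  Real.rpow_lt_one_of_one_lt_of_neg (by exact_mod_cast hl) (neg_neg_of_pos hq)

lemma floor_eq_of_mem_plateau (hq : 0 < q) (hx : x ∈ plateau q l) : ⌊x⌋₊ = l := by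
  obtain ⟨hl, hlx, hxl⟩ := mem_plateau.1 hx
  have := natCast_rpow_neg_lt_one hq hl
  exact (Nat.floor_eq_iff ((Nat.cast_nonneg l).trans hlx)).2 ⟨hlx, by linarith⟩

lemma stepProfile_eq_of_mem_plateau (hq : 0 < q) (hx : x ∈ plateau q l) :
    stepProfile q x = l := by
  rw [stepProfile, indicator_of_mem (mem_iUnion_of_mem l hx), floor_eq_of_mem_plateau hq hx]

lemma stepProfile_nonneg (q x : ℝ) : 0 ≤ stepProfile q x :=
  indicator_nonneg (fun _ _ => Nat.cast_nonneg _) x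

lemma abs_stepProfile_le (q x : ℝ) : |stepProfile q x| ≤ |x| := by
  rw [abs_of_nonneg (stepProfile_nonneg q x)]
  refine (indicator_le_self' (fun _ _ => Nat.cast_nonneg _) x).trans ?_
  rcases le_total 0 x with hx | hx
  · exact (Nat.floor_le hx).trans (le_abs_self x)
  · simp [Nat.floor_of_nonpos hx]

lemma measurable_stepProfile (q : ℝ) : Measurable (stepProfile q) :=
  (measurable_from_top.comp Nat.measurable_floor).indicator
    (MeasurableSet.iUnion (measurableSet_plateau q))

lemma integrable_stepProfile (hq : 2 < q) : Integrable (stepProfile q) := by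
  have hq0 : 0 < q := by linarith
  have hint : ∀ l, ∫ x in plateau q l, ‖(⌊x⌋₊ : ℝ)‖ =
      if 2 ≤ l then (l : ℝ) * (l : ℝ) ^ (-q) else 0 := by
    intro l
    rw [setIntegral_congr_fun (measurableSet_plateau q l) (g := fun _ => (l : ℝ))
      (fun x hx => by simp [floor_eq_of_mem_plateau hq0 hx]), setIntegral_const,
      volume_real_plateau, smul_eq_mul]
    split_ifs <;> simp [mul_comm]
  refine (integrable_indicator_iff (MeasurableSet.iUnion (measurableSet_plateau q))).2 <|
    integrableOn_iUnion_of_summable_integral_norm (fun l => ?_) ?_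
  · exact (integrableOn_const (isCompact_plateau q l).measure_ne_top).congr_fun
      (fun x hx => (congrArg Nat.cast (floor_eq_of_mem_plateau hq0 hx)).symm)
      (measurableSet_plateau q l)
  · have hsum : Summable fun l : ℕ => (l : ℝ) * (l : ℝ) ^ (-q) := by
      refine (Real.summable_nat_rpow.2 (by linarith : 1 - q < -1)).congr fun l => ?_
      rw [sub_eq_add_neg, Real.rpow_add' (Nat.cast_nonneg l) (by linarith), Real.rpow_one]
    simp_rw [hint]
    exact hsum.of_nonneg_of_le (fun l => by split_ifs <;> positivity)
      (fun l => by split_ifs <;> [exact le_rfl; positivity])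

lemma intervalIntegrable_stepProfile_sq_mul_pow (q : ℝ) (p : ℕ) (a b : ℝ) :
    IntervalIntegrable (fun τ => stepProfile q τ ^ 2 * τ ^ p) volume a b := by
  refine (continuous_abs.pow (p + 2)).intervalIntegrable a b |>.mono_fun'
    (((measurable_stepProfile q).pow_const 2).mul (measurable_id.pow_const p)).aestronglyMeasurable
    (ae_of_all _ fun τ => ?_)
  simp only [norm_mul, norm_pow, Real.norm_eq_abs, Pi.pow_apply]
  rw [pow_add, mul_comm]
  have := abs_stepProfile_le q τ
  gcongr

lemma le_integral_stepProfile_sq_mul_pow (hq : 0 < q) (hl : 2 ≤ l) (hx : (l : ℝ) + 1 ≤ x)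
    (p : ℕ) :
    (l : ℝ) ^ (-q) * (l : ℝ) ^ (p + 2) ≤ ∫ τ in (0 : ℝ)..x, stepProfile q τ ^ 2 * τ ^ p := by
  have hε := natCast_rpow_neg_lt_one hq hl
  have hε0 : 0 ≤ (l : ℝ) ^ (-q) := Real.rpow_nonneg (Nat.cast_nonneg l) _
  have hlower : ∫ _ in (l : ℝ)..l + (l : ℝ) ^ (-q), (l : ℝ) ^ (p + 2) ≤
      ∫ τ in (l : ℝ)..l + (l : ℝ) ^ (-q), stepProfile q τ ^ 2 * τ ^ p := by
    refine intervalIntegral.integral_mono_on (by linarith) intervalIntegrable_const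
      (intervalIntegrable_stepProfile_sq_mul_pow q p _ _) fun τ hτ => ?_
    rw [stepProfile_eq_of_mem_plateau hq (mem_plateau.2 ⟨hl, hτ⟩), pow_add, mul_comm]
    gcongr
    exact hτ.1
  rw [intervalIntegral.integral_const, add_sub_cancel_left, smul_eq_mul] at hlower
  refine hlower.trans <| intervalIntegral.integral_mono_interval (Nat.cast_nonneg l)
    (by linarith) (by linarith) ?_ (intervalIntegrable_stepProfile_sq_mul_pow q p _ _)
  filter_upwards [ae_restrict_mem measurableSet_Ioc] with τ hτ
  have := hτ.1.le
  have := stepProfile_nonneg q τ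
  positivity

lemma tendsto_integral_stepProfile_sq_mul_pow_div (hq0 : 0 < q) (hq : q < 3) (p : ℕ) :
    Tendsto (fun x => (∫ τ in (0 : ℝ)..x, stepProfile q τ ^ 2 * τ ^ (p + 1)) / x ^ p)
      atTop atTop := by
  refine tendsto_atTop_mono' atTop ?_ <|
    (tendsto_rpow_atTop (by linarith : 0 < 3 - q)).const_mul_atTop
      (by positivity : (0 : ℝ) < (1 / 2) ^ (p + 3))
  filter_upwards [eventually_ge_atTop (4 : ℝ)] with x hx
  have hx0 : 0 < x := by linarith
  have hfloor : 4 ≤ ⌊x⌋₊ := Nat.le_floor (by exact_mod_cast hx)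
  set L := ⌊x⌋₊ - 1 with hLdef
  have hL : (L : ℝ) = ⌊x⌋₊ - 1 := by rw [Nat.cast_sub (by omega), Nat.cast_one]
  have hLx : (L : ℝ) + 1 ≤ x := by rw [hL]; linarith [Nat.floor_le hx0.le]
  have hxL : x / 2 ≤ L := by rw [hL]; linarith [Nat.lt_floor_add_one x]
  have hrpow : x ^ (-q) ≤ (L : ℝ) ^ (-q) :=
    Real.rpow_le_rpow_of_nonpos (by linarith) (by linarith) (by linarith)
  calc (1 / 2) ^ (p + 3) * x ^ (3 - q) = x ^ (-q) * (x / 2) ^ (p + 1 + 2) / x ^ p := by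
        rw [Real.rpow_sub hx0, Real.rpow_neg hx0.le, show (3 : ℝ) = (3 : ℕ) by norm_num,
          Real.rpow_natCast]
        field_simp
        ring
    _ ≤ (L : ℝ) ^ (-q) * (L : ℝ) ^ (p + 1 + 2) / x ^ p := by
        gcongr
    _ ≤ _ := by
        gcongr
        exact le_integral_stepProfile_sq_mul_pow hq0 (by omega) hLx (p + 1)

lemma eq_stepProfile {δ : ℝ → ℝ} (hq : 0 < q)
    (hδ1 : ∀ l : ℕ, 2 ≤ l → ∀ x ∈ Icc (l : ℝ) ((l : ℝ) + (l : ℝ) ^ (-q)), δ x = l)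
    (hδ2 : ∀ x : ℝ, (∀ l : ℕ, 2 ≤ l → x ∉ Icc (l : ℝ) ((l : ℝ) + (l : ℝ) ^ (-q))) → δ x = 0) :
    δ = stepProfile q := by
  ext x
  by_cases hx : ∃ l, x ∈ plateau q l
  · obtain ⟨l, hxl⟩ := hx
    obtain ⟨hl, hxI⟩ := mem_plateau.1 hxl
    rw [hδ1 l hl x hxI, stepProfile_eq_of_mem_plateau hq hxl]
  · rw [hδ2 x fun l hl hxI => hx ⟨l, mem_plateau.2 ⟨hl, hxI⟩⟩, stepProfile,
      indicator_of_notMem (by simpa using hx)]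

end StepProfile

/-- The step function `δ̄` equal to `l` on `[l, l + l^{-5/2}]` for each integer `l ≥ 2` and `0`
elsewhere satisfies `∫₀^∞ δ̄ < ∞`, while for all integers `2 ≤ k < n`,
`x^{-(2n-2k)} ∫₀^x δ̄(τ)² τ^{2(n-k)+1} dτ → ∞` as `x → ∞`. -/
theorem stmt8 (δ : ℝ → ℝ)
    (hδ1 : ∀ l : ℕ, 2 ≤ l →
      ∀ x ∈ Icc (l : ℝ) ((l : ℝ) + (l : ℝ) ^ (-(5 / 2) : ℝ)), δ x = (l : ℝ))
    (hδ2 : ∀ x : ℝ,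
      (∀ l : ℕ, 2 ≤ l → x ∉ Icc (l : ℝ) ((l : ℝ) + (l : ℝ) ^ (-(5 / 2) : ℝ))) → δ x = 0) :
    IntegrableOn δ (Ici 0) ∧
      ∀ n k : ℕ, 2 ≤ k → k < n →
        Tendsto (fun x : ℝ =>
            (∫ τ in (0 : ℝ)..x, δ τ ^ 2 * τ ^ (2 * (n - k) + 1)) / x ^ (2 * n - 2 * k))
          atTop atTop := by
  obtain rfl := eq_stepProfile (by norm_num) hδ1 hδ2
  refine ⟨(integrable_stepProfile (by norm_num)).integrableOn, fun n k _ _ => ?_⟩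
  rw [show 2 * n - 2 * k = 2 * (n - k) by omega]
  exact tendsto_integral_stepProfile_sq_mul_pow_div (by norm_num) (by norm_num) _
end

section
/- For any integers n, k with 2 ≤ k < n, there exists a nonnegative C^∞ function δ on [0,∞) such that ∫₀^∞ δ(x) dx < ∞ and lim_{x→∞} x^{-(2n-2k)} ∫₀^x δ(τ)² τ^{2(n-k)+1} dτ = ∞. -/
open MeasureTheory Filter Set Real

namespace Stmt9

/-- The counterexample density: an analytic function with sharp bumps at half-integers. -/
noncomputable def del (τ : ℝ) : ℝ :=
  τ * Real.exp (-((1 + τ ^ 2) ^ 3 * Real.cos (π * τ) ^ 2))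

/-- The weighted integrand. -/
noncomputable def g (m : ℕ) (τ : ℝ) : ℝ := del τ ^ 2 * τ ^ (2 * m + 1)

lemma del_contDiff : ContDiff ℝ (⊤ : ℕ∞) del := by
  unfold del
  exact contDiff_id.mul (((((contDiff_const.add (contDiff_id.pow 2)).pow 3).mul
    ((Real.contDiff_cos.comp (contDiff_const.mul contDiff_id)).pow 2)).neg).exp)

lemma del_cont : Continuous del := del_contDiff.continuous

lemma del_nonneg (τ : ℝ) (h : 0 ≤ τ) : 0 ≤ del τ :=
  mul_nonneg h (Real.exp_pos _).le

lemma cos_sq_shift (j : ℕ) (u : ℝ) :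
    Real.cos (π * (u + ((j : ℝ) + 1/2))) ^ 2 = Real.sin (π * u) ^ 2 := by
  have : π * (u + ((j : ℝ) + 1/2)) = (π * u + π/2) + (j : ℝ) * π := by ring
  rw [this, Real.cos_add_nat_mul_pi, mul_pow, Real.cos_add_pi_div_two, ← pow_mul,
    mul_comm j 2, pow_mul]
  norm_num

private lemma sin_sq_ge_aux (u : ℝ) (hu : 0 ≤ u) (h : u ≤ 1/2) :
    4 * u ^ 2 ≤ Real.sin (π * u) ^ 2 := by
  have h1 : 2 * u ≤ Real.sin (π * u) := by
    have := Real.mul_le_sin (x := π * u) (by positivity)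
      (by nlinarith [Real.pi_pos])
    calc 2 * u = 2 / π * (π * u) := by
          field_simp
      _ ≤ _ := this
  nlinarith [h1, sq_nonneg u]

lemma sin_sq_ge (u : ℝ) (h : |u| ≤ 1/2) : 4 * u ^ 2 ≤ Real.sin (π * u) ^ 2 := by
  rcases le_or_gt 0 u with hu | hu
  · exact sin_sq_ge_aux u hu (by rwa [abs_of_nonneg hu] at h)
  · have := sin_sq_ge_aux (-u) (by linarith) (by rwa [abs_of_neg hu] at h)
    have e : Real.sin (π * -u) = - Real.sin (π * u) := by
      rw [mul_neg, Real.sin_neg]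
    rw [e] at this; nlinarith [this]

lemma sin_sq_le (u : ℝ) : Real.sin (π * u) ^ 2 ≤ π ^ 2 * u ^ 2 := by
  have := Real.sin_sq_le_sq (x := π * u)
  nlinarith [this]

/-- pointwise upper bound on `[j, j+1]`. -/
lemma del_upper (j : ℕ) (τ : ℝ) (h1 : (j : ℝ) ≤ τ) (h2 : τ ≤ (j : ℝ) + 1) :
    ‖del τ‖ ≤ ((j : ℝ) + 1) *
      Real.exp (-(((j : ℝ) + 1) ^ 6 / 2) * (τ - ((j : ℝ) + 1/2)) ^ 2) := by
  have hτ0 : (0 : ℝ) ≤ τ := le_trans (Nat.cast_nonneg j) h1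
  rw [Real.norm_eq_abs, abs_of_nonneg (del_nonneg τ hτ0)]
  set u : ℝ := τ - ((j : ℝ) + 1/2) with hu
  have hG : ((j : ℝ) + 1) ^ 6 / 8 ≤ (1 + τ ^ 2) ^ 3 := by
    have e1 : ((j : ℝ) + 1) ^ 2 / 2 ≤ 1 + τ ^ 2 := by nlinarith [sq_nonneg ((j : ℝ) - 1)]
    calc ((j : ℝ) + 1) ^ 6 / 8 = (((j : ℝ) + 1) ^ 2 / 2) ^ 3 := by ring
      _ ≤ (1 + τ ^ 2) ^ 3 := by
          apply pow_le_pow_left₀ (by positivity) e1 3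
  have hc : 4 * u ^ 2 ≤ Real.cos (π * τ) ^ 2 := by
    have : τ = u + ((j : ℝ) + 1/2) := by rw [hu]; ring
    rw [this, cos_sq_shift j u]
    exact sin_sq_ge u (by rw [abs_le]; constructor <;> simp [hu] <;> linarith)
  have hexp : Real.exp (-((1 + τ ^ 2) ^ 3 * Real.cos (π * τ) ^ 2)) ≤
      Real.exp (-(((j : ℝ) + 1) ^ 6 / 2) * u ^ 2) := by
    apply Real.exp_le_exp.2
    have : (((j : ℝ) + 1) ^ 6 / 2) * u ^ 2 ≤ (1 + τ ^ 2) ^ 3 * Real.cos (π * τ) ^ 2 := by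
      calc (((j : ℝ) + 1) ^ 6 / 2) * u ^ 2 = (((j : ℝ) + 1) ^ 6 / 8) * (4 * u ^ 2) := by ring
        _ ≤ (1 + τ ^ 2) ^ 3 * Real.cos (π * τ) ^ 2 := by
            apply mul_le_mul hG hc (by positivity) (by positivity)
    linarith
  unfold del
  apply mul_le_mul h2 hexp (Real.exp_pos _).le (by positivity)

/-- per-interval integral bound -/
lemma del_interval_bound (j : ℕ) :
    ∫ τ in Ioc (j : ℝ) ((j : ℝ) + 1), ‖del τ‖ ≤ 3 / ((j : ℝ) + 1) ^ 2 := by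
  set b : ℝ := ((j : ℝ) + 1) ^ 6 / 2 with hbdef
  have hb : 0 < b := by positivity
  set c : ℝ := (j : ℝ) + 1/2
  set h : ℝ → ℝ := fun τ => ((j : ℝ) + 1) * Real.exp (-b * (τ - c) ^ 2) with hh
  have hint : Integrable h := ((integrable_exp_neg_mul_sq hb).comp_sub_right c).const_mul _
  have step1 : ∫ τ in Ioc (j : ℝ) ((j : ℝ) + 1), ‖del τ‖ ≤ ∫ τ in Ioc (j : ℝ) ((j : ℝ) + 1), h τ := by
    apply setIntegral_mono_on (del_cont.norm.integrableOn_Ioc) hint.integrableOn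
      measurableSet_Ioc
    intro x hx
    exact del_upper j x hx.1.le hx.2
  have step2 : ∫ τ in Ioc (j : ℝ) ((j : ℝ) + 1), h τ ≤ ∫ τ, h τ :=
    setIntegral_le_integral hint (ae_of_all _ fun x => by positivity)
  have step3 : ∫ τ, h τ = ((j : ℝ) + 1) * Real.sqrt (π / b) := by
    rw [hh]
    rw [integral_const_mul]
    congr 1
    rw [integral_sub_right_eq_self (fun x => Real.exp (-b * x ^ 2)) c]
    exact integral_gaussian b
  have step4 : ((j : ℝ) + 1) * Real.sqrt (π / b) ≤ 3 / ((j : ℝ) + 1) ^ 2 := by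
    have hs : Real.sqrt (π / b) ≤ 3 / ((j : ℝ) + 1) ^ 3 := by
      have h9 : π / b ≤ (3 / ((j : ℝ) + 1) ^ 3) ^ 2 := by
        have hπ : π ≤ 4 := Real.pi_le_four
        rw [div_pow, ← pow_mul, hbdef, div_div_eq_mul_div]
        norm_num
        gcongr
        linarith
      calc Real.sqrt (π / b) ≤ Real.sqrt ((3 / ((j : ℝ) + 1) ^ 3) ^ 2) := Real.sqrt_le_sqrt h9
        _ = 3 / ((j : ℝ) + 1) ^ 3 := Real.sqrt_sq (by positivity)
    calc ((j : ℝ) + 1) * Real.sqrt (π / b) ≤ ((j : ℝ) + 1) * (3 / ((j : ℝ) + 1) ^ 3) := by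
          apply mul_le_mul_of_nonneg_left hs (by positivity)
      _ = 3 / ((j : ℝ) + 1) ^ 2 := by field_simp
  linarith

lemma sum_inv_sq_bound (N : ℕ) :
    ∑ j ∈ Finset.range N, 3 / ((j : ℝ) + 1) ^ 2 ≤ 6 := by
  have key : ∀ M : ℕ, ∑ j ∈ Finset.range (M + 1), 3 / ((j : ℝ) + 1) ^ 2 ≤ 6 - 3 / ((M : ℝ) + 1) := by
    intro M
    induction M with
    | zero => norm_num
    | succ M ih =>
      rw [Finset.sum_range_succ]
      push_cast
      have h1 : (0:ℝ) < (M:ℝ) + 1 := by positivity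
      have h2 : (0:ℝ) < (M:ℝ) + 2 := by positivity
      have hkey : 3 / ((M : ℝ) + 2) ^ 2 ≤ 3 / ((M : ℝ) + 1) - 3 / ((M : ℝ) + 2) := by
        rw [div_sub_div _ _ (ne_of_gt h1) (ne_of_gt h2),
          div_le_div_iff₀ (by positivity) (by positivity)]
        nlinarith []
      have : ((M:ℝ) + 1 + 1) = (M:ℝ) + 2 := by ring
      rw [this]
      linarith [ih]
  cases N with
  | zero => simp
  | succ M =>
    have h3 : (0:ℝ) ≤ 3 / ((M : ℝ) + 1) := by positivity
    linarith [key M]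

lemma integral_norm_le (N : ℕ) : ∫ x in (0:ℝ)..(N:ℝ), ‖del x‖ ≤ 6 := by
  have key : ∀ M : ℕ, ∫ x in (0:ℝ)..(M:ℝ), ‖del x‖ ≤ ∑ j ∈ Finset.range M, 3 / ((j : ℝ) + 1) ^ 2 := by
    intro M
    induction M with
    | zero => simp
    | succ M ih =>
      have hadj : ∫ x in (0:ℝ)..((M:ℝ)+1), ‖del x‖ =
          (∫ x in (0:ℝ)..(M:ℝ), ‖del x‖) + ∫ x in (M:ℝ)..((M:ℝ)+1), ‖del x‖ :=
        (intervalIntegral.integral_add_adjacent_intervals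
          (del_cont.norm.intervalIntegrable _ _) (del_cont.norm.intervalIntegrable _ _)).symm
      have hstep : ∫ x in (M:ℝ)..((M:ℝ)+1), ‖del x‖ ≤ 3 / ((M : ℝ) + 1) ^ 2 := by
        rw [intervalIntegral.integral_of_le (by linarith : (M:ℝ) ≤ (M:ℝ)+1)]
        exact del_interval_bound M
      rw [Finset.sum_range_succ]
      push_cast
      linarith [ih]
  calc ∫ x in (0:ℝ)..(N:ℝ), ‖del x‖ ≤ _ := key N
    _ ≤ 6 := sum_inv_sq_bound N

lemma del_integrableOn : IntegrableOn del (Ici (0:ℝ)) := by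
  rw [integrableOn_Ici_iff_integrableOn_Ioi]
  apply integrableOn_Ioi_of_intervalIntegral_norm_bounded 6 0 (l := atTop) (b := fun N : ℕ => (N:ℝ))
  · exact fun i => (del_cont.intervalIntegrable 0 (i:ℝ)).1
  · exact tendsto_natCast_atTop_atTop
  · exact Eventually.of_forall integral_norm_le

/-- Pointwise lower bound on the bump near `j + 1/2`, for `1 ≤ j`. -/
lemma del_lower (j : ℕ) (hj : 1 ≤ j) (τ : ℝ)
    (hτ : τ ∈ Icc ((j : ℝ) + 1/2 - 1/((j:ℝ)+1)^3) ((j : ℝ) + 1/2 + 1/((j:ℝ)+1)^3)) :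
    (j : ℝ) * Real.exp (-128) ≤ del τ := by
  obtain ⟨h1, h2⟩ := hτ
  have hj1 : (1:ℝ) ≤ (j:ℝ) := by exact_mod_cast hj
  have hw : 1/((j:ℝ)+1)^3 ≤ 1/8 := by
    apply div_le_div_of_nonneg_left (by norm_num) (by norm_num)
    calc (8:ℝ) = 2^3 := by norm_num
      _ ≤ ((j:ℝ)+1)^3 := by apply pow_le_pow_left₀ (by norm_num); linarith
  have hwpos : (0:ℝ) < 1/((j:ℝ)+1)^3 := by positivity
  have hτj : (j:ℝ) ≤ τ := by linarith
  have hτj1 : τ ≤ (j:ℝ) + 1 := by linarith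
  have hτ0 : (0:ℝ) ≤ τ := by linarith
  set u : ℝ := τ - ((j:ℝ) + 1/2) with hudef
  have hu : |u| ≤ 1/((j:ℝ)+1)^3 := by
    rw [abs_le]; constructor <;> [skip; skip] <;> simp only [hudef] <;> linarith
  have hGc : (1 + τ ^ 2) ^ 3 * Real.cos (π * τ) ^ 2 ≤ 128 := by
    have hG : (1 + τ ^ 2) ^ 3 ≤ 8 * ((j:ℝ)+1)^6 := by
      have e1 : 1 + τ ^ 2 ≤ 2 * ((j:ℝ)+1)^2 := by nlinarith
      calc (1 + τ ^ 2) ^ 3 ≤ (2 * ((j:ℝ)+1)^2) ^ 3 := by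
            apply pow_le_pow_left₀ (by positivity) e1
        _ = 8 * ((j:ℝ)+1)^6 := by ring
    have hc : Real.cos (π * τ) ^ 2 ≤ π^2 / ((j:ℝ)+1)^6 := by
      have : τ = u + ((j:ℝ) + 1/2) := by rw [hudef]; ring
      rw [this, cos_sq_shift j u]
      calc Real.sin (π * u) ^ 2 ≤ π ^ 2 * u ^ 2 := sin_sq_le u
        _ ≤ π ^ 2 / ((j:ℝ)+1)^6 := by
            rw [div_eq_mul_inv]
            apply mul_le_mul_of_nonneg_left _ (by positivity)
            have h2' : u^2 ≤ (1/((j:ℝ)+1)^3)^2 := by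
              rw [← sq_abs u]
              apply pow_le_pow_left₀ (abs_nonneg u) hu
            calc u^2 ≤ (1/((j:ℝ)+1)^3)^2 := h2'
              _ = (((j:ℝ)+1)^6)⁻¹ := by rw [div_pow, ← pow_mul]; norm_num
    have hπ : π ≤ 4 := Real.pi_le_four
    calc (1 + τ ^ 2) ^ 3 * Real.cos (π * τ) ^ 2 ≤ (8 * ((j:ℝ)+1)^6) * (π^2 / ((j:ℝ)+1)^6) := by
          apply mul_le_mul hG hc (by positivity) (by positivity)
      _ = 8 * π^2 := by field_simp
      _ ≤ 128 := by nlinarith [Real.pi_pos]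
  have hee : Real.exp (-128) ≤ Real.exp (-((1 + τ ^ 2) ^ 3 * Real.cos (π * τ) ^ 2)) := by
    apply Real.exp_le_exp.2; linarith
  calc (j : ℝ) * Real.exp (-128) ≤ τ * Real.exp (-((1 + τ ^ 2) ^ 3 * Real.cos (π * τ) ^ 2)) := by
        apply mul_le_mul hτj hee (Real.exp_pos _).le hτ0
    _ = del τ := rfl

lemma g_cont (m : ℕ) : Continuous (g m) := (del_cont.pow 2).mul (continuous_pow _)

lemma g_nonneg (m : ℕ) (τ : ℝ) (h : 0 ≤ τ) : 0 ≤ g m τ := by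
  unfold g; positivity

/-- lower bound for the integral over `[j, j+1]` -/
lemma g_bump (m : ℕ) (hm : 1 ≤ m) (j : ℕ) :
    Real.exp (-256) / 4 * (j:ℝ) ^ (2*m) ≤ ∫ τ in (j:ℝ)..((j:ℝ)+1), g m τ := by
  have hInt : ∀ a b : ℝ, 0 ≤ a → IntegrableOn (g m) (Ioc a b) :=
    fun a b _ => ((g_cont m).intervalIntegrable a b).1
  rw [intervalIntegral.integral_of_le (by linarith : (j:ℝ) ≤ (j:ℝ)+1)]
  rcases Nat.eq_zero_or_pos j with hj | hj
  · subst hj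
    simp only [Nat.cast_zero]
    rw [zero_pow (by omega : 2*m ≠ 0), mul_zero]
    apply setIntegral_nonneg measurableSet_Ioc
    intro x hx
    exact g_nonneg m x (le_of_lt hx.1)
  · have hj1 : (1:ℝ) ≤ (j:ℝ) := by exact_mod_cast hj
    set w : ℝ := 1/((j:ℝ)+1)^3 with hwdef
    have hwpos : 0 < w := by positivity
    have hw : w ≤ 1/8 := by
      rw [hwdef]
      apply div_le_div_of_nonneg_left (by norm_num) (by norm_num)
      calc (8:ℝ) = 2^3 := by norm_num
        _ ≤ ((j:ℝ)+1)^3 := by apply pow_le_pow_left₀ (by norm_num); linarith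
    set c : ℝ := (j:ℝ) + 1/2 with hcdef
    have hsub : Icc (c - w) (c + w) ⊆ Ioc (j:ℝ) ((j:ℝ)+1) := by
      intro x hx
      obtain ⟨hx1, hx2⟩ := hx
      constructor
      · rw [hcdef] at hx1; linarith
      · rw [hcdef] at hx2; linarith
    have step1 : ∫ τ in Icc (c-w) (c+w), g m τ ≤ ∫ τ in Ioc (j:ℝ) ((j:ℝ)+1), g m τ := by
      apply setIntegral_mono_set (hInt _ _ (by positivity))
      · filter_upwards [ae_restrict_mem measurableSet_Ioc] with x hx
        exact g_nonneg m x (le_trans (by positivity) hx.1.le)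
      · exact HasSubset.Subset.eventuallyLE hsub
    have step2 : (Real.exp (-256) * (j:ℝ)^(2*m+3)) * (volume (Icc (c-w) (c+w))).toReal ≤
        ∫ τ in Icc (c-w) (c+w), g m τ := by
      apply setIntegral_ge_of_const_le_real measurableSet_Icc (measure_Icc_lt_top).ne
      · intro x hx
        have hdel := del_lower j hj x hx
        have hx1 : (j:ℝ) ≤ x := (hsub hx).1.le
        have hx0 : (0:ℝ) ≤ x := le_trans (by positivity) hx1
        have h1 : ((j:ℝ) * Real.exp (-128))^2 ≤ del x ^ 2 := by
          apply pow_le_pow_left₀ (by positivity) hdel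
        have h2 : (j:ℝ) ^ (2*m+1) ≤ x ^ (2*m+1) :=
          pow_le_pow_left₀ (by positivity) hx1 _
        calc Real.exp (-256) * (j:ℝ)^(2*m+3)
            = ((j:ℝ) * Real.exp (-128))^2 * (j:ℝ)^(2*m+1) := by
              have he : Real.exp (-128:ℝ)^2 = Real.exp (-256) := by
                rw [sq, ← Real.exp_add]; norm_num
              rw [mul_pow, he]; ring
          _ ≤ del x ^ 2 * x ^ (2*m+1) := by
              apply mul_le_mul h1 h2 (by positivity) (by positivity)
          _ = g m x := rfl
      · exact (hInt _ _ (by positivity)).mono_set (fun x hx => hsub hx)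
    have hvol : (volume (Icc (c-w) (c+w))).toReal = 2*w := by
      rw [Real.volume_Icc]
      rw [ENNReal.toReal_ofReal (by linarith)]
      ring
    have hjpos : (0:ℝ) < (j:ℝ) := by linarith
    have step3 : Real.exp (-256) / 4 * (j:ℝ) ^ (2*m) ≤
        (Real.exp (-256) * (j:ℝ)^(2*m+3)) * (2*w) := by
      have h8 : ((j:ℝ)+1)^3 ≤ 8 * (j:ℝ)^3 := by
        calc ((j:ℝ)+1)^3 ≤ (2*(j:ℝ))^3 := by
              apply pow_le_pow_left₀ (by positivity); linarith
          _ = 8 * (j:ℝ)^3 := by ring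
      calc Real.exp (-256) / 4 * (j:ℝ) ^ (2*m)
          = (Real.exp (-256) * (j:ℝ)^(2*m+3)) * (2 * (1/(8*(j:ℝ)^3))) := by
            field_simp; ring
        _ ≤ (Real.exp (-256) * (j:ℝ)^(2*m+3)) * (2*w) := by
            rw [hwdef]
            have h9 : (1:ℝ)/(8*(j:ℝ)^3) ≤ 1/((j:ℝ)+1)^3 :=
              one_div_le_one_div_of_le (by positivity) h8
            exact mul_le_mul_of_nonneg_left (by linarith [h9]) (by positivity)
    rw [hvol] at step2
    linarith [step1, step2, step3]

lemma F_lower (m : ℕ) (hm : 1 ≤ m) (N : ℕ) :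
    Real.exp (-256) / 4 * ∑ j ∈ Finset.range N, (j:ℝ) ^ (2*m) ≤
      ∫ τ in (0:ℝ)..(N:ℝ), g m τ := by
  induction N with
  | zero => simp
  | succ N ih =>
    have hadj : ∫ τ in (0:ℝ)..((N:ℝ)+1), g m τ =
        (∫ τ in (0:ℝ)..(N:ℝ), g m τ) + ∫ τ in (N:ℝ)..((N:ℝ)+1), g m τ :=
      (intervalIntegral.integral_add_adjacent_intervals
        ((g_cont m).intervalIntegrable _ _) ((g_cont m).intervalIntegrable _ _)).symm
    rw [Finset.sum_range_succ, mul_add]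
    push_cast
    rw [hadj]
    have := g_bump m hm N
    linarith [ih]

lemma sum_pow_lower (q N : ℕ) (hN : 2 ≤ N) :
    (N:ℝ)^(q+1)/4^(q+1) ≤ ∑ j ∈ Finset.range N, (j:ℝ) ^ q := by
  have hsub : Finset.Ico (N/2) N ⊆ Finset.range N := by
    intro x hx
    simp only [Finset.mem_Ico] at hx
    simp only [Finset.mem_range]
    omega
  have h1 : ∑ j ∈ Finset.Ico (N/2) N, (j:ℝ) ^ q ≤ ∑ j ∈ Finset.range N, (j:ℝ) ^ q :=
    Finset.sum_le_sum_of_subset_of_nonneg hsub (fun i _ _ => by positivity)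
  have hNhalf : (N:ℝ)/4 ≤ ((N/2 : ℕ) : ℝ) := by
    have h : N ≤ 4 * (N/2) := by omega
    have h' := (Nat.cast_le (α := ℝ)).2 h
    push_cast at h'
    linarith
  have hlow : ∀ j ∈ Finset.Ico (N/2) N, ((N:ℝ)/4) ^ q ≤ (j:ℝ) ^ q := by
    intro j hj
    simp only [Finset.mem_Ico] at hj
    have : ((N/2 : ℕ) : ℝ) ≤ (j:ℝ) := by exact_mod_cast hj.1
    exact pow_le_pow_left₀ (by positivity) (by linarith) q
  have h2 := Finset.card_nsmul_le_sum (Finset.Ico (N/2) N) (fun j => (j:ℝ)^q) (((N:ℝ)/4)^q) hlow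
  rw [Nat.card_Ico, nsmul_eq_mul] at h2
  have hcard : (N:ℝ)/4 ≤ ((N - N/2 : ℕ) : ℝ) := by
    have h : N ≤ 4 * (N - N/2) := by omega
    have h' := (Nat.cast_le (α := ℝ)).2 h
    push_cast at h'
    linarith
  calc (N:ℝ)^(q+1)/4^(q+1) = ((N:ℝ)/4) * ((N:ℝ)/4)^q := by
        rw [← div_pow, pow_succ]; ring
    _ ≤ ((N - N/2 : ℕ) : ℝ) * ((N:ℝ)/4)^q := by
        apply mul_le_mul_of_nonneg_right hcard (by positivity)
    _ ≤ ∑ j ∈ Finset.Ico (N/2) N, (j:ℝ) ^ q := h2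
    _ ≤ _ := h1

end Stmt9

open Stmt9 in
/-- For any integers `2 ≤ k < n` there is a nonnegative smooth function `δ` on `[0,∞)` with
`∫₀^∞ δ < ∞` and `x^{-(2n-2k)} ∫₀^x δ(τ)² τ^{2(n-k)+1} dτ → ∞` as `x → ∞`. -/
theorem stmt9 (n k : ℕ) (hk : 2 ≤ k) (hkn : k < n) :
    ∃ δ : ℝ → ℝ, ContDiffOn ℝ (⊤ : ℕ∞) δ (Ici 0) ∧ (∀ x ≥ (0 : ℝ), 0 ≤ δ x) ∧
      IntegrableOn δ (Ici 0) ∧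
      Tendsto (fun x : ℝ =>
          (∫ τ in (0 : ℝ)..x, δ τ ^ 2 * τ ^ (2 * (n - k) + 1)) / x ^ (2 * n - 2 * k))
        atTop atTop := by
  set m : ℕ := n - k with hmdef
  have hm : 1 ≤ m := by omega
  have h2 : 2 * n - 2 * k = 2 * m := by omega
  refine ⟨del, del_contDiff.contDiffOn, fun x hx => del_nonneg x hx, del_integrableOn, ?_⟩
  rw [h2]
  set c₀ : ℝ := Real.exp (-256) / 4 with hc₀
  have hc₀pos : 0 < c₀ := by positivity
  set c₁ : ℝ := c₀ / 8 ^ (2*m+1) with hc₁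
  have hc₁pos : 0 < c₁ := by positivity
  refine tendsto_atTop_mono' atTop ?_ (Tendsto.const_mul_atTop hc₁pos tendsto_id)
  · filter_upwards [eventually_ge_atTop (4:ℝ)] with x hx
    have hx0 : (0:ℝ) < x := by linarith
    set N : ℕ := ⌊x⌋₊ with hNdef
    have hN2 : 2 ≤ N := Nat.le_floor (by norm_num; linarith)
    have hNx : (N:ℝ) ≤ x := Nat.floor_le (by linarith)
    have hxN : x ≤ (N:ℝ) + 1 := (Nat.lt_floor_add_one x).le
    have hx2 : x/2 ≤ (N:ℝ) := by linarith
    have hFN : c₀ * ((N:ℝ)^(2*m+1)/4^(2*m+1)) ≤ ∫ τ in (0:ℝ)..(N:ℝ), g m τ := by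
      calc c₀ * ((N:ℝ)^(2*m+1)/4^(2*m+1)) ≤ c₀ * ∑ j ∈ Finset.range N, (j:ℝ) ^ (2*m) := by
            apply mul_le_mul_of_nonneg_left (sum_pow_lower (2*m) N hN2) hc₀pos.le
        _ ≤ _ := F_lower m hm N
    have hsplit : ∫ τ in (0:ℝ)..x, g m τ =
        (∫ τ in (0:ℝ)..(N:ℝ), g m τ) + ∫ τ in (N:ℝ)..x, g m τ :=
      (intervalIntegral.integral_add_adjacent_intervals
        ((g_cont m).intervalIntegrable _ _) ((g_cont m).intervalIntegrable _ _)).symm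
    have htail : 0 ≤ ∫ τ in (N:ℝ)..x, g m τ :=
      intervalIntegral.integral_nonneg hNx
        (fun u hu => g_nonneg m u (le_trans (by positivity) hu.1))
    have hFx : c₁ * x^(2*m+1) ≤ ∫ τ in (0:ℝ)..x, g m τ := by
      have hpow : (x/2)^(2*m+1) ≤ (N:ℝ)^(2*m+1) :=
        pow_le_pow_left₀ (by positivity) hx2 _
      have e1 : c₁ * x^(2*m+1) = c₀ * ((x/2)^(2*m+1)/4^(2*m+1)) := by
        rw [hc₁, div_pow]
        rw [show (8:ℝ)^(2*m+1) = 2^(2*m+1) * 4^(2*m+1) by rw [← mul_pow]; norm_num]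
        field_simp
      rw [e1]
      calc c₀ * ((x/2)^(2*m+1)/4^(2*m+1)) ≤ c₀ * ((N:ℝ)^(2*m+1)/4^(2*m+1)) := by
            apply mul_le_mul_of_nonneg_left _ hc₀pos.le
            apply div_le_div_of_nonneg_right hpow (by positivity)
        _ ≤ ∫ τ in (0:ℝ)..(N:ℝ), g m τ := hFN
        _ ≤ ∫ τ in (0:ℝ)..x, g m τ := by rw [hsplit]; linarith
    show c₁ * x ≤ (∫ τ in (0:ℝ)..x, del τ ^ 2 * τ ^ (2 * m + 1)) / x ^ (2*m)
    rw [le_div_iff₀ (by positivity)]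
    calc c₁ * x * x^(2*m) = c₁ * x^(2*m+1) := by rw [pow_succ]; ring
      _ ≤ _ := hFx
end

section
/- For any real p > 1 and any integer n ≥ 2, there exists a nonnegative C^∞ function η on [0,∞) such that ∫₀^∞ η(x) dx < ∞ and lim_{x→∞} x^{-(2n-2)} ∫₀^x η(τ)^p τ^{2n-1-p} dτ = ∞. -/
open MeasureTheory Filter Set

lemma aux_cos_upper {θ : ℝ} (hθ : |θ| ≤ 1/2) :
    Real.cos (2*Real.pi*θ) - 1 ≤ -(8*θ^2) := by
  have hπ := Real.pi_pos
  have h2 : Real.cos (2*(Real.pi*θ)) = 1 - 2*Real.sin (Real.pi*θ)^2 := by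
    rw [Real.cos_two_mul', Real.cos_sq']; ring
  have hj : 2*|θ| ≤ Real.sin (Real.pi*|θ|) := by
    have h1 : Real.pi*|θ| ≤ Real.pi/2 := by
      have := mul_le_mul_of_nonneg_left hθ hπ.le
      linarith
    have h := Real.mul_le_sin (x := Real.pi*|θ|) (by positivity) h1
    have he : 2/Real.pi*(Real.pi*|θ|) = 2*|θ| := by field_simp
    rwa [he] at h
  have hsq : 4*θ^2 ≤ Real.sin (Real.pi*θ)^2 := by
    have h4 : (2*|θ|)^2 ≤ Real.sin (Real.pi*|θ|)^2 :=
      pow_le_pow_left₀ (by positivity) hj 2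
    have h5 : Real.sin (Real.pi*|θ|)^2 = Real.sin (Real.pi*θ)^2 := by
      rcases abs_cases θ with ⟨h, _⟩ | ⟨h, _⟩
      · rw [h]
      · rw [h, mul_neg, Real.sin_neg]; ring
    have h6 : (2*|θ|)^2 = 4*θ^2 := by
      rw [mul_pow, sq_abs]; ring
    rw [h6, h5] at h4
    exact h4
  have harg : 2*Real.pi*θ = 2*(Real.pi*θ) := by ring
  rw [harg, h2]
  linarith

lemma aux_cos_lower (θ : ℝ) : -(2*Real.pi^2*θ^2) ≤ Real.cos (2*Real.pi*θ) - 1 := by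
  have h2 : Real.cos (2*(Real.pi*θ)) = 1 - 2*Real.sin (Real.pi*θ)^2 := by
    rw [Real.cos_two_mul', Real.cos_sq']; ring
  have hs : Real.sin (Real.pi*θ)^2 ≤ (Real.pi*θ)^2 := Real.sin_sq_le_sq
  have harg : 2*Real.pi*θ = 2*(Real.pi*θ) := by ring
  rw [harg, h2]
  nlinarith [hs]

lemma aux_cos_periodic (τ : ℝ) (j : ℕ) :
    Real.cos (2*Real.pi*τ) = Real.cos (2*Real.pi*(τ-(j:ℝ))) := by
  have h : 2*Real.pi*τ = 2*Real.pi*(τ-(j:ℝ)) + (j:ℤ)*(2*Real.pi) := by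
    push_cast; ring
  rw [h, Real.cos_add_int_mul_two_pi]

lemma aux_tau_rpow {e τ b : ℝ} (h1 : 1 ≤ τ) (hb : τ ≤ b) : b ^ (-|e|) ≤ τ ^ e := by
  have hτ : (0:ℝ) < τ := by linarith
  have hbpos : (0:ℝ) < b := by linarith
  rw [Real.rpow_def_of_pos hτ, Real.rpow_def_of_pos hbpos]
  apply Real.exp_le_exp.mpr
  have hlog1 : 0 ≤ Real.log τ := Real.log_nonneg h1
  have hlog2 : Real.log τ ≤ Real.log b := Real.log_le_log hτ hb
  have habs : |Real.log τ * e| ≤ Real.log b * |e| := by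
    rw [abs_mul, abs_of_nonneg hlog1]
    exact mul_le_mul_of_nonneg_right hlog2 (abs_nonneg e)
  have := neg_abs_le (Real.log τ * e)
  nlinarith [this, habs]

set_option maxHeartbeats 1000000 in
/-- For any real `p > 1` and integer `n ≥ 2` there is a nonnegative smooth function `η` on
`[0,∞)` with `∫₀^∞ η < ∞` and `x^{-(2n-2)} ∫₀^x η(τ)^p τ^{2n-1-p} dτ → ∞` as `x → ∞`. -/
theorem stmt11 (p : ℝ) (hp : 1 < p) (n : ℕ) (hn : 2 ≤ n) :
    ∃ η : ℝ → ℝ, ContDiffOn ℝ (⊤ : ℕ∞) η (Ici 0) ∧ (∀ x ≥ (0 : ℝ), 0 ≤ η x) ∧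
      IntegrableOn η (Ici 0) ∧
      Tendsto (fun x : ℝ =>
          (∫ τ in (0 : ℝ)..x, η τ ^ p * τ ^ (2 * (n : ℝ) - 1 - p)) / x ^ (2 * n - 2))
        atTop atTop := by
  have hp1 : (0:ℝ) < p - 1 := by linarith
  have hp0 : (0:ℝ) < p := by linarith
  have hn2 : (2:ℝ) ≤ (n:ℝ) := by exact_mod_cast hn
  obtain ⟨A, hA⟩ : ∃ A : ℝ, A = 1 + 2/(p-1) := ⟨_, rfl⟩
  have hA1 : 1 < A := by
    have h2 : 0 < 2/(p-1) := by positivity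
    rw [hA]; linarith
  have hA0 : 0 < A := by linarith
  obtain ⟨C, hC⟩ : ∃ C : ℝ, C = 2*A + 4 := ⟨_, rfl⟩
  have hC0 : 0 < C := by rw [hC]; linarith
  set e : ℝ := 2 * (n:ℝ) - 1 - p with he
  set E : ℝ := |e| with hE
  have hE0 : 0 ≤ E := abs_nonneg e
  set φ : ℝ → ℝ :=
    fun τ => Real.exp (A*τ + Real.exp (C*τ) * (Real.cos (2*Real.pi*τ) - 1)) with hφ
  set η : ℝ → ℝ := fun τ => τ^(2*n) * φ τ with hη
  have hφpos : ∀ τ, 0 < φ τ := fun τ => Real.exp_pos _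
  have hpow_nonneg : ∀ τ : ℝ, 0 ≤ τ^(2*n) := by
    intro τ; rw [pow_mul]; positivity
  have hηnonneg : ∀ τ, 0 ≤ η τ := fun τ => mul_nonneg (hpow_nonneg τ) (hφpos τ).le
  have hlin : ∀ c : ℝ, ContDiff ℝ (⊤ : WithTop ℕ∞) (fun τ : ℝ => c * τ) :=
    fun c => contDiff_const.mul contDiff_id
  have hφcd : ContDiff ℝ (⊤ : WithTop ℕ∞) φ := by
    apply Real.contDiff_exp.comp
    exact (hlin A).add ((Real.contDiff_exp.comp (hlin C)).mul
      ((Real.contDiff_cos.comp (hlin (2*Real.pi))).sub contDiff_const))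
  have hcd : ContDiff ℝ (⊤ : WithTop ℕ∞) η := (contDiff_id.pow (2*n)).mul hφcd
  have hφc : Continuous φ := hφcd.continuous
  have hηc : Continuous η := hcd.continuous
  refine ⟨η, (hcd.of_le le_top).contDiffOn, fun x _ => hηnonneg x, ?_, ?_⟩
  · -- Integrability
    have hcover : Ici (0:ℝ) ⊆ ⋃ j : ℕ, Ico ((j:ℝ)-1/2) ((j:ℝ)+1/2) := by
      intro x hx
      have hx0 : (0:ℝ) ≤ x := hx
      refine mem_iUnion.2 ⟨⌊x + 1/2⌋₊, ?_, ?_⟩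
      · have h1 : (⌊x + 1/2⌋₊ : ℝ) ≤ x + 1/2 := Nat.floor_le (by linarith)
        linarith
      · have h2 : x + 1/2 < ⌊x + 1/2⌋₊ + 1 := Nat.lt_floor_add_one _
        linarith
    refine IntegrableOn.mono_set ?_ hcover
    apply integrableOn_iUnion_of_summable_integral_norm
    · intro i
      exact ((hηc.continuousOn).integrableOn_compact isCompact_Icc).mono_set
        Ico_subset_Icc_self
    · -- summability of the integrals
      obtain ⟨ρ, hρdef⟩ : ∃ r : ℝ, r = Real.exp (-2 : ℝ) := ⟨_, rfl⟩
      have hρpos : 0 < ρ := hρdef ▸ Real.exp_pos _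
      have hρlt : ρ < 1 := by
        rw [hρdef, Real.exp_lt_one_iff]; norm_num
      have hgeo : Summable fun j : ℕ => ((j:ℝ)+1)^(2*n) * ρ^j := by
        have h0 := summable_pow_mul_geometric_of_norm_lt_one (R := ℝ) (2*n)
          (r := ρ) (by rw [Real.norm_eq_abs, abs_of_pos hρpos]; exact hρlt)
        have h1 := (summable_nat_add_iff 1).mpr h0
        have h2 := h1.mul_left (ρ⁻¹)
        apply h2.congr
        intro j
        push_cast
        rw [pow_succ]
        field_simp
      obtain ⟨c₂, hc₂⟩ : ∃ c : ℝ, c = 2 * Real.exp (A + 1) := ⟨_, rfl⟩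
      have hc₂0 : 0 ≤ c₂ := by rw [hc₂]; positivity
      have hbound : Summable (fun j : ℕ => c₂ * (((j:ℝ)+1)^(2*n) * ρ^j)) :=
        hgeo.mul_left c₂
      refine Summable.of_nonneg_of_le (fun i => integral_nonneg fun x => norm_nonneg _)
        (fun j => ?_) hbound
      -- per-interval bound
      obtain ⟨b, hb⟩ : ∃ b : ℝ, b = 8 * Real.exp (C*((j:ℝ)-1/2)) := ⟨_, rfl⟩
      have hbpos : 0 < b := by rw [hb]; positivity
      set D : ℝ → ℝ :=
        fun τ => ((j:ℝ)+1)^(2*n) * Real.exp (A*((j:ℝ)+1/2)) *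
          Real.exp (-b*(τ-(j:ℝ))^2) with hD
      have hDnonneg : ∀ τ, 0 ≤ D τ := by
        intro τ
        have h1 := hpow_nonneg ((j:ℝ)+1)
        simp only [hD]
        positivity
      have hDint : Integrable D := by
        simp only [hD]
        apply Integrable.const_mul
        have h1 := integrable_exp_neg_mul_sq hbpos
        exact h1.comp_sub_right (j:ℝ)
      have hle : ∀ τ ∈ Ico ((j:ℝ)-1/2) ((j:ℝ)+1/2), ‖η τ‖ ≤ D τ := by
        intro τ hτ
        obtain ⟨hτ1, hτ2⟩ := hτ
        have hjnn : (0:ℝ) ≤ (j:ℝ) := Nat.cast_nonneg j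
        rw [Real.norm_of_nonneg (hηnonneg τ)]
        have hpow : τ^(2*n) ≤ ((j:ℝ)+1)^(2*n) := by
          have h1 : |τ| ≤ (j:ℝ)+1 := abs_le.mpr ⟨by linarith, by linarith⟩
          calc τ^(2*n) = |τ|^(2*n) := ((Even.pow_abs ⟨n, by ring⟩ τ)).symm
          _ ≤ ((j:ℝ)+1)^(2*n) := pow_le_pow_left₀ (abs_nonneg τ) h1 _
        have hφle : φ τ ≤ Real.exp (A*((j:ℝ)+1/2)) * Real.exp (-b*(τ-(j:ℝ))^2) := by
          rw [← Real.exp_add]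
          apply Real.exp_le_exp.mpr
          have hcos : Real.cos (2*Real.pi*τ) - 1 ≤ -(8*(τ-(j:ℝ))^2) := by
            rw [aux_cos_periodic τ j]
            exact aux_cos_upper (abs_le.mpr ⟨by linarith, by linarith⟩)
          have hcosle0 : Real.cos (2*Real.pi*τ) - 1 ≤ 0 := by
            have := Real.cos_le_one (2*Real.pi*τ); linarith
          have hexpmono : Real.exp (C*((j:ℝ)-1/2)) ≤ Real.exp (C*τ) :=
            Real.exp_le_exp.mpr (mul_le_mul_of_nonneg_left hτ1 hC0.le)
          have h2 : Real.exp (C*τ) * (Real.cos (2*Real.pi*τ) - 1)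
              ≤ Real.exp (C*((j:ℝ)-1/2)) * (Real.cos (2*Real.pi*τ) - 1) :=
            mul_le_mul_of_nonpos_right hexpmono hcosle0
          have h3 : Real.exp (C*((j:ℝ)-1/2)) * (Real.cos (2*Real.pi*τ) - 1)
              ≤ Real.exp (C*((j:ℝ)-1/2)) * (-(8*(τ-(j:ℝ))^2)) :=
            mul_le_mul_of_nonneg_left hcos (Real.exp_pos _).le
          have h4 : A*τ ≤ A*((j:ℝ)+1/2) :=
            mul_le_mul_of_nonneg_left (by linarith) hA0.le
          have h5 : Real.exp (C*((j:ℝ)-1/2)) * (-(8*(τ-(j:ℝ))^2))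
              = -b*(τ-(j:ℝ))^2 := by rw [hb]; ring
          rw [h5] at h3
          linarith
        calc τ^(2*n) * φ τ ≤ ((j:ℝ)+1)^(2*n) *
              (Real.exp (A*((j:ℝ)+1/2)) * Real.exp (-b*(τ-(j:ℝ))^2)) := by
              apply mul_le_mul hpow hφle (hφpos τ).le (hpow_nonneg _)
        _ = D τ := by simp only [hD]; ring
      have hIntIco : IntegrableOn η (Ico ((j:ℝ)-1/2) ((j:ℝ)+1/2)) :=
        ((hηc.continuousOn).integrableOn_compact isCompact_Icc).mono_set
          Ico_subset_Icc_self
      have hgauss : ∫ τ, Real.exp (-b*(τ-(j:ℝ))^2) = Real.sqrt (Real.pi / b) := by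
        rw [integral_sub_right_eq_self (fun y => Real.exp (-b*y^2)) ((j:ℝ))]
        exact integral_gaussian b
      have hsqrt : Real.sqrt (Real.pi / b) ≤ 2 * Real.exp (-(C*((j:ℝ)-1/2))/2) := by
        have hπ4 : Real.pi ≤ 4 := by nlinarith [Real.pi_lt_d2]
        have h1 : Real.pi / b ≤ 4 * Real.exp (-(C*((j:ℝ)-1/2))) := by
          rw [hb, Real.exp_neg, div_le_iff₀ (by positivity)]
          have hexp := Real.exp_pos (C*((j:ℝ)-1/2))
          have hinv : (Real.exp (C*((j:ℝ)-1/2)))⁻¹ * Real.exp (C*((j:ℝ)-1/2)) = 1 :=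
            inv_mul_cancel₀ hexp.ne'
          nlinarith [hπ4, hexp, hinv]
        calc Real.sqrt (Real.pi / b) ≤ Real.sqrt (4 * Real.exp (-(C*((j:ℝ)-1/2)))) :=
              Real.sqrt_le_sqrt h1
        _ = 2 * Real.exp (-(C*((j:ℝ)-1/2))/2) := by
            rw [Real.sqrt_mul (by norm_num : (0:ℝ) ≤ 4), ← Real.exp_half]
            have h4 : Real.sqrt 4 = 2 := by
              rw [show (4:ℝ) = 2^2 by norm_num, Real.sqrt_sq (by norm_num : (0:ℝ) ≤ 2)]
            rw [h4]
      calc ∫ x in Ico ((j:ℝ)-1/2) ((j:ℝ)+1/2), ‖η x‖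
          ≤ ∫ x in Ico ((j:ℝ)-1/2) ((j:ℝ)+1/2), D x := by
            apply setIntegral_mono_on hIntIco.norm hDint.integrableOn
              measurableSet_Ico hle
      _ ≤ ∫ x, D x := setIntegral_le_integral hDint (ae_of_all _ hDnonneg)
      _ = ((j:ℝ)+1)^(2*n) * Real.exp (A*((j:ℝ)+1/2)) * Real.sqrt (Real.pi / b) := by
            simp only [hD]
            rw [integral_const_mul, hgauss]
      _ ≤ ((j:ℝ)+1)^(2*n) * Real.exp (A*((j:ℝ)+1/2)) *
            (2 * Real.exp (-(C*((j:ℝ)-1/2))/2)) := by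
            apply mul_le_mul_of_nonneg_left hsqrt
            have := hpow_nonneg ((j:ℝ)+1)
            positivity
      _ ≤ c₂ * (((j:ℝ)+1)^(2*n) * ρ^j) := by
            have hρj : ρ^j = Real.exp ((-2)*(j:ℝ)) := by
              rw [hρdef, ← Real.exp_nat_mul]
              congr 1; ring
            rw [hρj, hc₂]
            have hkey : Real.exp (A*((j:ℝ)+1/2)) * (2 * Real.exp (-(C*((j:ℝ)-1/2))/2))
                ≤ 2 * Real.exp (A + 1) * Real.exp ((-2)*(j:ℝ)) := by
              have h1 : Real.exp (A*((j:ℝ)+1/2)) * Real.exp (-(C*((j:ℝ)-1/2))/2)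
                  ≤ Real.exp (A + 1) * Real.exp ((-2)*(j:ℝ)) := by
                rw [← Real.exp_add, ← Real.exp_add]
                apply Real.exp_le_exp.mpr
                rw [hC]
                nlinarith [hA0]
              calc Real.exp (A*((j:ℝ)+1/2)) * (2 * Real.exp (-(C*((j:ℝ)-1/2))/2))
                  = 2 * (Real.exp (A*((j:ℝ)+1/2)) * Real.exp (-(C*((j:ℝ)-1/2))/2)) := by ring
              _ ≤ 2 * (Real.exp (A + 1) * Real.exp ((-2)*(j:ℝ))) := by linarith [h1]
              _ = 2 * Real.exp (A + 1) * Real.exp ((-2)*(j:ℝ)) := by ring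
            calc ((j:ℝ)+1)^(2*n) * Real.exp (A*((j:ℝ)+1/2)) *
                  (2 * Real.exp (-(C*((j:ℝ)-1/2))/2))
                ≤ ((j:ℝ)+1)^(2*n) * (2 * Real.exp (A + 1) * Real.exp ((-2)*(j:ℝ))) := by
                  rw [mul_assoc]
                  exact mul_le_mul_of_nonneg_left hkey (hpow_nonneg _)
            _ = 2 * Real.exp (A + 1) * (((j:ℝ)+1)^(2*n) * Real.exp ((-2)*(j:ℝ))) := by
                  ring
  · -- Tendsto
    set g : ℝ → ℝ := fun τ => η τ ^ p * τ ^ e with hg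
    have hgp : Continuous fun τ => η τ ^ p :=
      hηc.rpow_const (fun τ => Or.inr hp0.le)
    have hgon : ∀ s : Set ℝ, (0:ℝ) ∉ s → ContinuousOn g s := by
      intro s hs
      exact (hgp.continuousOn).mul (ContinuousOn.rpow_const continuousOn_id
        (fun τ hτ => Or.inl (fun h0 => hs (h0 ▸ hτ))))
    have hgnonneg : ∀ τ : ℝ, 0 ≤ τ → 0 ≤ g τ := by
      intro τ hτ
      exact mul_nonneg (Real.rpow_nonneg (hηnonneg τ) p) (Real.rpow_nonneg hτ e)
    obtain ⟨q, hq⟩ : ∃ q : ℝ, q = 2*(n:ℝ)*p + e := ⟨_, rfl⟩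
    have hq0 : 0 < q := by rw [hq, he]; nlinarith
    have hhc : Continuous fun τ : ℝ => |τ| ^ q * φ τ ^ p := by
      apply Continuous.mul
      · exact continuous_abs.rpow_const (fun τ => Or.inr hq0.le)
      · exact hφc.rpow_const (fun τ => Or.inl (hφpos τ).ne')
    have hint : ∀ x : ℝ, 0 ≤ x → IntervalIntegrable g volume 0 x := by
      intro x hx0
      rw [intervalIntegrable_iff_integrableOn_Ioc_of_le hx0]
      have h1 : IntegrableOn (fun τ : ℝ => |τ| ^ q * φ τ ^ p) (Ioc 0 x) :=
        ((hhc.continuousOn).integrableOn_compact isCompact_Icc).mono_set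
          Ioc_subset_Icc_self
      apply h1.congr_fun ?_ measurableSet_Ioc
      intro τ hτ
      have hτ0 : (0:ℝ) < τ := hτ.1
      have habs : |τ| = τ := abs_of_pos hτ0
      have hη2 : η τ ^ p = τ ^ (2*(n:ℝ)*p) * φ τ ^ p := by
        simp only [hη]
        rw [Real.mul_rpow (hpow_nonneg τ) (hφpos τ).le]
        congr 1
        rw [← Real.rpow_natCast τ (2*n), ← Real.rpow_mul hτ0.le]
        congr 1
        push_cast; ring
      show |τ| ^ q * φ τ ^ p = g τ
      simp only [hg]
      rw [habs, hη2, hq, Real.rpow_add hτ0]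
      ring
    -- lower bound for x ≥ 4
    obtain ⟨c₀, hc₀⟩ : ∃ c : ℝ, c = 2 * Real.exp (-(p*A + 20*p + C/2)) := ⟨_, rfl⟩
    have hc₀pos : 0 < c₀ := by rw [hc₀]; positivity
    have hAp : A*(p-1) = p + 1 := by
      rw [hA]; field_simp; ring
    have key : ∀ x : ℝ, 4 ≤ x →
        c₀ * Real.exp ((p-1)*(x-2)) * x ^ (-E) ≤ (∫ τ in (0:ℝ)..x, g τ) := by
      intro x hx4
      have hx0 : (0:ℝ) ≤ x := by linarith
      have hxpos : (0:ℝ) < x := by linarith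
      have hfl : 4 ≤ ⌊x⌋₊ := Nat.le_floor (by exact_mod_cast hx4)
      set j : ℕ := ⌊x⌋₊ - 1 with hjdef
      have hj3 : 3 ≤ j := by omega
      have hj3' : (3:ℝ) ≤ (j:ℝ) := by exact_mod_cast hj3
      have hjx : (j:ℝ) + 1 ≤ x := by
        have hje : j + 1 = ⌊x⌋₊ := by omega
        have h1 : ((j + 1 : ℕ) : ℝ) ≤ x := by rw [hje]; exact Nat.floor_le hx0
        push_cast at h1; linarith
      have hxj : x < (j:ℝ) + 2 := by
        have hje : j + 2 = ⌊x⌋₊ + 1 := by omega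
        have h1 := Nat.lt_floor_add_one x
        have h2 : x < ((j + 2 : ℕ) : ℝ) := by
          rw [hje]; push_cast; push_cast at h1; linarith
        push_cast at h2; linarith
      obtain ⟨δ, hδdef⟩ : ∃ d : ℝ, d = Real.exp (-(C*((j:ℝ)+1))/2) := ⟨_, rfl⟩
      have hδpos : 0 < δ := hδdef ▸ Real.exp_pos _
      have hδ1 : δ ≤ 1 := by
        rw [hδdef]
        have h1 : -(C*((j:ℝ)+1))/2 ≤ 0 := by
          have hCj : 0 ≤ C*((j:ℝ)+1) := mul_nonneg hC0.le (by positivity)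
          linarith
        calc Real.exp (-(C*((j:ℝ)+1))/2) ≤ Real.exp 0 := Real.exp_le_exp.mpr h1
        _ = 1 := Real.exp_zero
      have hδsq : δ^2 * Real.exp (C*((j:ℝ)+1)) = 1 := by
        rw [hδdef, sq, ← Real.exp_add, ← Real.exp_add, ← Real.exp_zero]
        congr 1; ring
      have hπ2 : Real.pi^2 ≤ 10 := by nlinarith [Real.pi_lt_d2, Real.pi_pos]
      -- pointwise lower bound on the spike
      have hlow : ∀ τ ∈ Icc ((j:ℝ)-δ) ((j:ℝ)+δ),
          Real.exp ((A*(j:ℝ) - A - 20)*p) * ((j:ℝ)+1) ^ (-E) ≤ g τ := by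
        intro τ hτ
        obtain ⟨hτ1, hτ2⟩ := hτ
        have hτge1 : (1:ℝ) ≤ τ := by linarith
        have hτpos : (0:ℝ) < τ := by linarith
        have hτle : τ ≤ (j:ℝ)+1 := by linarith
        have hφlow : Real.exp (A*(j:ℝ) - A - 20) ≤ φ τ := by
          apply Real.exp_le_exp.mpr
          have hcos : -(2*Real.pi^2*(τ-(j:ℝ))^2) ≤ Real.cos (2*Real.pi*τ) - 1 := by
            rw [aux_cos_periodic τ j]
            exact aux_cos_lower _
          have hcosle0 : Real.cos (2*Real.pi*τ) - 1 ≤ 0 := by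
            have := Real.cos_le_one (2*Real.pi*τ); linarith
          have hexpmono : Real.exp (C*τ) ≤ Real.exp (C*((j:ℝ)+1)) :=
            Real.exp_le_exp.mpr (mul_le_mul_of_nonneg_left hτle hC0.le)
          have h2 : Real.exp (C*((j:ℝ)+1)) * (Real.cos (2*Real.pi*τ) - 1)
              ≤ Real.exp (C*τ) * (Real.cos (2*Real.pi*τ) - 1) :=
            mul_le_mul_of_nonpos_right hexpmono hcosle0
          have hsq : (τ-(j:ℝ))^2 ≤ δ^2 := by
            have h5 : |τ-(j:ℝ)| ≤ δ := abs_le.mpr ⟨by linarith, by linarith⟩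
            calc (τ-(j:ℝ))^2 = |τ-(j:ℝ)|^2 := (sq_abs _).symm
            _ ≤ δ^2 := pow_le_pow_left₀ (abs_nonneg _) h5 2
          have h3 : Real.exp (C*((j:ℝ)+1)) * (-(2*Real.pi^2*(τ-(j:ℝ))^2))
              ≥ -(2*Real.pi^2) := by
            have hep := (Real.exp_pos (C*((j:ℝ)+1))).le
            have hmul : Real.exp (C*((j:ℝ)+1)) * (τ-(j:ℝ))^2
                ≤ Real.exp (C*((j:ℝ)+1)) * δ^2 := mul_le_mul_of_nonneg_left hsq hep
            have hmul2 : 2*Real.pi^2 * (Real.exp (C*((j:ℝ)+1)) * (τ-(j:ℝ))^2)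
                ≤ 2*Real.pi^2 * (Real.exp (C*((j:ℝ)+1)) * δ^2) :=
              mul_le_mul_of_nonneg_left hmul (by positivity)
            have hδsq2 : 2*Real.pi^2 * (Real.exp (C*((j:ℝ)+1)) * δ^2) = 2*Real.pi^2 := by
              rw [show Real.exp (C*((j:ℝ)+1)) * δ^2 = 1 from by linarith [hδsq]]
              ring
            nlinarith [hmul2, hδsq2]
          have h4 : Real.exp (C*((j:ℝ)+1)) * (Real.cos (2*Real.pi*τ) - 1)
              ≥ Real.exp (C*((j:ℝ)+1)) * (-(2*Real.pi^2*(τ-(j:ℝ))^2)) :=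
            mul_le_mul_of_nonneg_left hcos (Real.exp_pos _).le
          have h6 : A*((j:ℝ)-δ) ≤ A*τ := mul_le_mul_of_nonneg_left hτ1 hA0.le
          have h7 : A*((j:ℝ)-δ) ≥ A*(j:ℝ) - A := by nlinarith
          nlinarith
        have hηlow : Real.exp (A*(j:ℝ) - A - 20) ≤ η τ := by
          simp only [hη]
          calc Real.exp (A*(j:ℝ) - A - 20) = 1 * Real.exp (A*(j:ℝ) - A - 20) := by ring
          _ ≤ τ^(2*n) * φ τ := by
              apply mul_le_mul (one_le_pow₀ hτge1) hφlow (Real.exp_pos _).le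
                (hpow_nonneg τ)
        have h8 : Real.exp ((A*(j:ℝ) - A - 20)*p) ≤ η τ ^ p := by
          rw [Real.exp_mul]
          exact Real.rpow_le_rpow (Real.exp_pos _).le hηlow hp0.le
        have h9 : ((j:ℝ)+1) ^ (-E) ≤ τ ^ e := by
          rw [hE]
          exact aux_tau_rpow hτge1 hτle
        show _ ≤ η τ ^ p * τ ^ e
        exact mul_le_mul h8 h9 (Real.rpow_nonneg (by positivity) _)
          (Real.rpow_nonneg (hηnonneg τ) _)
      have hII : IntervalIntegrable g volume ((j:ℝ)-δ) ((j:ℝ)+δ) := by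
        apply ContinuousOn.intervalIntegrable
        rw [uIcc_of_le (by linarith : (j:ℝ)-δ ≤ (j:ℝ)+δ)]
        apply hgon
        intro h0
        have h1 := h0.1
        linarith [h1]
      have hstep1 : 2*δ * (Real.exp ((A*(j:ℝ) - A - 20)*p) * ((j:ℝ)+1) ^ (-E))
          ≤ ∫ τ in ((j:ℝ)-δ)..((j:ℝ)+δ), g τ := by
        have h1 : ∫ τ in ((j:ℝ)-δ)..((j:ℝ)+δ),
            (Real.exp ((A*(j:ℝ) - A - 20)*p) * ((j:ℝ)+1) ^ (-E))
            = 2*δ * (Real.exp ((A*(j:ℝ) - A - 20)*p) * ((j:ℝ)+1) ^ (-E)) := by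
          rw [intervalIntegral.integral_const, smul_eq_mul]
          ring_nf
        rw [← h1]
        apply intervalIntegral.integral_mono_on (by linarith)
          intervalIntegrable_const hII hlow
      have hstep2 : ∫ τ in ((j:ℝ)-δ)..((j:ℝ)+δ), g τ ≤ ∫ τ in (0:ℝ)..x, g τ := by
        apply intervalIntegral.integral_mono_interval (by linarith) (by linarith)
          (by linarith) ?_ (hint x hx0)
        exact Filter.eventually_of_mem (self_mem_ae_restrict measurableSet_Ioc)
          (fun τ hτ => hgnonneg τ hτ.1.le)
      have harg : -(p*A + 20*p + C/2) + (p-1)*(j:ℝ)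
          = -(C*((j:ℝ)+1))/2 + (A*(j:ℝ) - A - 20)*p := by
        rw [hC]
        linear_combination (-(j:ℝ)) * hAp
      have hval0 : c₀ * Real.exp ((p-1)*(j:ℝ))
          = 2*δ * Real.exp ((A*(j:ℝ) - A - 20)*p) := by
        rw [hc₀, hδdef]
        calc 2 * Real.exp (-(p*A + 20*p + C/2)) * Real.exp ((p-1)*(j:ℝ))
            = 2 * Real.exp (-(p*A + 20*p + C/2) + (p-1)*(j:ℝ)) := by
              rw [Real.exp_add]; ring
        _ = 2 * Real.exp (-(C*((j:ℝ)+1))/2 + (A*(j:ℝ) - A - 20)*p) := by rw [harg]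
        _ = 2 * Real.exp (-(C*((j:ℝ)+1))/2) * Real.exp ((A*(j:ℝ) - A - 20)*p) := by
              rw [Real.exp_add]; ring
      have hval : c₀ * Real.exp ((p-1)*(j:ℝ)) * ((j:ℝ)+1) ^ (-E)
          = 2*δ * (Real.exp ((A*(j:ℝ) - A - 20)*p) * ((j:ℝ)+1) ^ (-E)) := by
        calc c₀ * Real.exp ((p-1)*(j:ℝ)) * ((j:ℝ)+1) ^ (-E)
            = (2*δ * Real.exp ((A*(j:ℝ) - A - 20)*p)) * ((j:ℝ)+1) ^ (-E) := by rw [hval0]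
        _ = 2*δ * (Real.exp ((A*(j:ℝ) - A - 20)*p) * ((j:ℝ)+1) ^ (-E)) := by ring
      have hcomp : c₀ * Real.exp ((p-1)*(x-2)) * x ^ (-E)
          ≤ c₀ * Real.exp ((p-1)*(j:ℝ)) * ((j:ℝ)+1) ^ (-E) := by
        have h1 : Real.exp ((p-1)*(x-2)) ≤ Real.exp ((p-1)*(j:ℝ)) :=
          Real.exp_le_exp.mpr (mul_le_mul_of_nonneg_left (by linarith) hp1.le)
        have h2 : x ^ (-E) ≤ ((j:ℝ)+1) ^ (-E) :=
          Real.rpow_le_rpow_of_nonpos (by linarith) hjx (by linarith)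
        have h3 : (0:ℝ) ≤ x ^ (-E) := Real.rpow_nonneg hx0 _
        have h4 : (0:ℝ) ≤ c₀ * Real.exp ((p-1)*(j:ℝ)) := by positivity
        calc c₀ * Real.exp ((p-1)*(x-2)) * x ^ (-E)
            ≤ c₀ * Real.exp ((p-1)*(j:ℝ)) * x ^ (-E) := by
              apply mul_le_mul_of_nonneg_right _ h3
              exact mul_le_mul_of_nonneg_left h1 hc₀pos.le
        _ ≤ c₀ * Real.exp ((p-1)*(j:ℝ)) * ((j:ℝ)+1) ^ (-E) :=
              mul_le_mul_of_nonneg_left h2 h4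
      calc c₀ * Real.exp ((p-1)*(x-2)) * x ^ (-E)
          ≤ c₀ * Real.exp ((p-1)*(j:ℝ)) * ((j:ℝ)+1) ^ (-E) := hcomp
      _ = 2*δ * (Real.exp ((A*(j:ℝ) - A - 20)*p) * ((j:ℝ)+1) ^ (-E)) := hval
      _ ≤ ∫ τ in ((j:ℝ)-δ)..((j:ℝ)+δ), g τ := hstep1
      _ ≤ ∫ τ in (0:ℝ)..x, g τ := hstep2
    -- conclude
    obtain ⟨s, hs⟩ : ∃ s : ℝ, s = E + ((2*n-2 : ℕ):ℝ) := ⟨_, rfl⟩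
    obtain ⟨c₁, hc₁⟩ : ∃ c : ℝ, c = c₀ * Real.exp (-2*(p-1)) := ⟨_, rfl⟩
    have hc₁pos : 0 < c₁ := by rw [hc₁]; positivity
    have hL : Tendsto (fun x : ℝ => c₁ * (Real.exp ((p-1)*x) / x ^ s)) atTop atTop :=
      (tendsto_exp_mul_div_rpow_atTop s (p-1) hp1).const_mul_atTop hc₁pos
    apply tendsto_atTop_mono' atTop ?_ hL
    filter_upwards [eventually_ge_atTop (4:ℝ)] with x hx4
    have hx0 : (0:ℝ) ≤ x := by linarith
    have hxpos : (0:ℝ) < x := by linarith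
    have hkey := key x hx4
    have hpowpos : (0:ℝ) < x ^ (2*n-2) := pow_pos hxpos _
    have heqL : c₁ * (Real.exp ((p-1)*x) / x ^ s)
        = (c₀ * Real.exp ((p-1)*(x-2)) * x ^ (-E)) / x ^ (2*n-2) := by
      have hxpow : (x:ℝ)^(2*n-2) = x ^ (((2*n-2:ℕ)):ℝ) := (Real.rpow_natCast x _).symm
      have hxs : x ^ s = x^E * x^(((2*n-2:ℕ)):ℝ) := by rw [hs]; exact Real.rpow_add hxpos _ _
      have hexp2 : Real.exp ((p-1)*(x-2)) = Real.exp ((p-1)*x) * Real.exp (-2*(p-1)) := by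
        rw [← Real.exp_add]; congr 1; ring
      have hne1 : x^E ≠ 0 := (Real.rpow_pos_of_pos hxpos E).ne'
      have hne2 : x^(((2*n-2:ℕ)):ℝ) ≠ 0 := (Real.rpow_pos_of_pos hxpos _).ne'
      rw [hc₁, hxpow, hxs, hexp2, Real.rpow_neg hx0]
      field_simp
    rw [heqL]
    gcongr
end

section
/- Let x₀ ∈ (0,∞] and let F : [0,x₀) → ℝ be a C² function with F(0) = F'(0) = 0 and F'' ≥ 0 on [0,x₀). Define v(x) = ∫₀^x 2τ √(1 + F'(τ)²) dτ. Then for every integer m ≥ 1 and every x ∈ (0,x₀), ∫₀^x [F'(τ) F''(τ) / (1 + F'(τ)²)^{3/2}] · v(τ)^m dτ ≤ v(x)^m. -/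
open MeasureTheory Filter Set

/-!
The weight `F'F''/(1+F'²)^{3/2}` is nonnegative (as `F'` increases from `F'(0) = 0`) and is the
derivative of `-1/√(1+F'²)`, a function with values in `[-1, 0)`; so its integral over `[0,x]`
is at most `1`. Since `v` is nondecreasing and nonnegative, `v(τ)^m ≤ v(x)^m` on `[0,x]`.
-/

theorem HasDerivAt.neg_inv_sqrt_one_add_sq {u : ℝ → ℝ} {u' t : ℝ} (hu : HasDerivAt u u' t) :
    HasDerivAt (fun y => -(√(1 + u y ^ 2))⁻¹)
      (u t * u' / (1 + u t ^ 2) ^ ((3 : ℝ) / 2)) t := by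
  have hpos : 0 < 1 + u t ^ 2 := by positivity
  have hsum : HasDerivAt (fun y => 1 + u y ^ 2) (2 * u t * u') t := by
    simpa using (hu.pow 2).const_add 1
  refine ((hsum.sqrt hpos.ne').inv (Real.sqrt_pos.2 hpos).ne').neg.congr_deriv ?_
  have hrpow : (1 + u t ^ 2) ^ ((3 : ℝ) / 2) = (1 + u t ^ 2) * √(1 + u t ^ 2) := by
    rw [show (3 : ℝ) / 2 = 1 + 1 / 2 by norm_num, Real.rpow_add hpos, Real.rpow_one,
      ← Real.sqrt_eq_rpow]
  rw [hrpow, Real.sq_sqrt hpos.le]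
  field_simp

theorem nonneg_of_hasDerivAt_of_deriv_nonneg {u u' : ℝ → ℝ} {a b : ℝ}
    (hu : ∀ x ∈ Icc a b, HasDerivAt u (u' x) x) (hua : 0 ≤ u a)
    (hu' : ∀ x ∈ Ioo a b, 0 ≤ u' x) {x : ℝ} (hx : x ∈ Icc a b) : 0 ≤ u x := by
  have hmono : MonotoneOn u (Icc a b) :=
    monotoneOn_of_hasDerivWithinAt_nonneg (convex_Icc a b)
      (fun y hy => (hu y hy).continuousAt.continuousWithinAt)
      (fun y hy => (hu y (interior_subset hy)).hasDerivWithinAt)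
      (fun y hy => hu' y (by rwa [interior_Icc] at hy))
  exact hua.trans (hmono (left_mem_Icc.2 (hx.1.trans hx.2)) hx hx.1)

theorem integral_mul_div_one_add_sq_rpow_le_one {u u' : ℝ → ℝ} {a b : ℝ} (hab : a ≤ b)
    (hu : ∀ x ∈ Icc a b, HasDerivAt u (u' x) x)
    (hnonneg : ∀ x ∈ Ioo a b, 0 ≤ u x * u' x / (1 + u x ^ 2) ^ ((3 : ℝ) / 2)) :
    IntervalIntegrable (fun x => u x * u' x / (1 + u x ^ 2) ^ ((3 : ℝ) / 2)) volume a b ∧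
      ∫ x in a..b, u x * u' x / (1 + u x ^ 2) ^ ((3 : ℝ) / 2) ≤ 1 := by
  have hderiv : ∀ x ∈ Icc a b, HasDerivAt (fun y => -(√(1 + u y ^ 2))⁻¹)
      (u x * u' x / (1 + u x ^ 2) ^ ((3 : ℝ) / 2)) x :=
    fun x hx => (hu x hx).neg_inv_sqrt_one_add_sq
  have hcont : ContinuousOn (fun y => -(√(1 + u y ^ 2))⁻¹) (Icc a b) :=
    fun x hx => (hderiv x hx).continuousAt.continuousWithinAt
  have hint :
      IntervalIntegrable (fun x => u x * u' x / (1 + u x ^ 2) ^ ((3 : ℝ) / 2)) volume a b :=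
    (intervalIntegrable_iff_integrableOn_Ioc_of_le hab).2 <|
      intervalIntegral.integrableOn_deriv_of_nonneg hcont
        (fun x hx => hderiv x (Ioo_subset_Icc_self hx)) hnonneg
  refine ⟨hint, ?_⟩
  rw [intervalIntegral.integral_eq_sub_of_hasDerivAt_of_le hab hcont
    (fun x hx => hderiv x (Ioo_subset_Icc_self hx)) hint]
  have hb : 0 ≤ (√(1 + u b ^ 2))⁻¹ := by positivity
  have ha : (√(1 + u a ^ 2))⁻¹ ≤ 1 :=
    inv_le_one_of_one_le₀ (Real.one_le_sqrt.2 (le_add_of_nonneg_right (sq_nonneg _)))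
  linarith

theorem integral_mul_le_integral_mul_of_le {A f : ℝ → ℝ} {a b c : ℝ} (hab : a ≤ b)
    (hA : IntervalIntegrable A volume a b) (hA0 : ∀ x ∈ Ioo a b, 0 ≤ A x)
    (hf0 : ∀ x ∈ Ioo a b, 0 ≤ f x) (hfc : ∀ x ∈ Ioo a b, f x ≤ c) :
    ∫ x in a..b, A x * f x ≤ (∫ x in a..b, A x) * c := by
  rw [← intervalIntegral.integral_mul_const, intervalIntegral.integral_of_le hab,
    intervalIntegral.integral_of_le hab, integral_Ioc_eq_integral_Ioo,
    integral_Ioc_eq_integral_Ioo]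
  refine integral_mono_of_nonneg ?_ ((hA.1.mono_set Ioo_subset_Ioc_self).mul_const c) ?_
  · filter_upwards [ae_restrict_mem measurableSet_Ioo] with x hx
    exact mul_nonneg (hA0 x hx) (hf0 x hx)
  · filter_upwards [ae_restrict_mem measurableSet_Ioo] with x hx
    exact mul_le_mul_of_nonneg_left (hfc x hx) (hA0 x hx)

theorem integral_mem_Icc_zero_integral {w : ℝ → ℝ} {a b : ℝ}
    (hw : IntervalIntegrable w volume a b) (hw0 : ∀ x ∈ Icc a b, 0 ≤ w x) {t : ℝ}
    (ht : t ∈ Icc a b) : ∫ x in a..t, w x ∈ Icc 0 (∫ x in a..b, w x) :=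
  ⟨intervalIntegral.integral_nonneg ht.1 fun x hx => hw0 x ⟨hx.1, hx.2.trans ht.2⟩,
    intervalIntegral.integral_mono_interval le_rfl ht.1 ht.2
      ((ae_restrict_mem measurableSet_Ioc).mono fun x hx => hw0 x (Ioc_subset_Icc_self hx)) hw⟩

theorem integral_mul_div_one_add_sq_rpow_mul_pow_le {u u' : ℝ → ℝ} {b : ℝ} (hb : 0 ≤ b)
    (hu : ∀ x ∈ Icc 0 b, HasDerivAt u (u' x) x) (hu0 : 0 ≤ u 0)
    (hu' : ∀ x ∈ Ioo 0 b, 0 ≤ u' x) (m : ℕ) :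
    ∫ x in (0 : ℝ)..b, u x * u' x / (1 + u x ^ 2) ^ ((3 : ℝ) / 2) *
        (∫ t in (0 : ℝ)..x, 2 * t * √(1 + u t ^ 2)) ^ m ≤
      (∫ t in (0 : ℝ)..b, 2 * t * √(1 + u t ^ 2)) ^ m := by
  have hA0 : ∀ x ∈ Ioo 0 b, 0 ≤ u x * u' x / (1 + u x ^ 2) ^ ((3 : ℝ) / 2) := fun x hx =>
    div_nonneg (mul_nonneg (nonneg_of_hasDerivAt_of_deriv_nonneg hu hu0 hu'
      (Ioo_subset_Icc_self hx)) (hu' x hx)) (by positivity)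
  have hw : IntervalIntegrable (fun t => 2 * t * √(1 + u t ^ 2)) volume 0 b := by
    refine ContinuousOn.intervalIntegrable fun t ht => ContinuousAt.continuousWithinAt ?_
    rw [uIcc_of_le hb] at ht
    exact (continuousAt_id.const_mul 2).mul (((hu t ht).continuousAt.pow 2).const_add 1).sqrt
  have hv : ∀ x ∈ Icc 0 b, ∫ t in (0 : ℝ)..x, 2 * t * √(1 + u t ^ 2) ∈
      Icc 0 (∫ t in (0 : ℝ)..b, 2 * t * √(1 + u t ^ 2)) :=
    fun x => integral_mem_Icc_zero_integral hw fun t ht => by have := ht.1; positivity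
  obtain ⟨hint, hle⟩ := integral_mul_div_one_add_sq_rpow_le_one hb hu hA0
  calc _ ≤ (∫ x in (0 : ℝ)..b, u x * u' x / (1 + u x ^ 2) ^ ((3 : ℝ) / 2)) *
          (∫ t in (0 : ℝ)..b, 2 * t * √(1 + u t ^ 2)) ^ m :=
        integral_mul_le_integral_mul_of_le hb hint hA0
          (fun x hx => pow_nonneg (hv x (Ioo_subset_Icc_self hx)).1 m)
          (fun x hx => pow_le_pow_left₀ (hv x (Ioo_subset_Icc_self hx)).1
            (hv x (Ioo_subset_Icc_self hx)).2 m)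
    _ ≤ 1 * (∫ t in (0 : ℝ)..b, 2 * t * √(1 + u t ^ 2)) ^ m :=
        mul_le_mul_of_nonneg_right hle (pow_nonneg (hv b (right_mem_Icc.2 hb)).1 m)
    _ = _ := one_mul _

theorem stmt12_general (x₀ : EReal)
    (F' F'' : ℝ → ℝ)
    (hF'' : ∀ x : ℝ, 0 ≤ x → (x : EReal) < x₀ → HasDerivAt F' (F'' x) x)
    (hF'0 : F' 0 = 0)
    (hconv : ∀ x : ℝ, 0 ≤ x → (x : EReal) < x₀ → 0 ≤ F'' x)
    (v : ℝ → ℝ) (hv : ∀ x, v x = ∫ τ in (0 : ℝ)..x, 2 * τ * Real.sqrt (1 + F' τ ^ 2)) :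
    ∀ m : ℕ, 1 ≤ m → ∀ x : ℝ, 0 < x → (x : EReal) < x₀ →
      (∫ τ in (0 : ℝ)..x,
          F' τ * F'' τ / (1 + F' τ ^ 2) ^ ((3 : ℝ) / 2) * v τ ^ m) ≤ v x ^ m := by
  intro m _ x hx hxx₀
  have hlt : ∀ τ ∈ Icc 0 x, (τ : EReal) < x₀ := fun τ hτ =>
    (EReal.coe_le_coe_iff.2 hτ.2).trans_lt hxx₀
  simp only [hv]
  exact integral_mul_div_one_add_sq_rpow_mul_pow_le hx.le
    (fun τ hτ => hF'' τ hτ.1 (hlt τ hτ)) hF'0.ge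
    (fun τ hτ => hconv τ hτ.1.le (hlt τ (Ioo_subset_Icc_self hτ))) m

/-- Let `x₀ ∈ (0,∞]` and `F` a `C²` function on `[0,x₀)` with `F(0) = F'(0) = 0` and
`F'' ≥ 0`, and set `v(x) = ∫₀^x 2τ√(1+F'(τ)²) dτ`. Then for every integer `m ≥ 1` and
`x ∈ (0,x₀)`, `∫₀^x [F'F''/(1+F'²)^{3/2}] v^m dτ ≤ v(x)^m`. -/
theorem stmt12 (x₀ : EReal) (hx₀ : 0 < x₀)
    (F F' F'' : ℝ → ℝ)
    (hF' : ∀ x : ℝ, 0 ≤ x → (x : EReal) < x₀ → HasDerivAt F (F' x) x)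
    (hF'' : ∀ x : ℝ, 0 ≤ x → (x : EReal) < x₀ → HasDerivAt F' (F'' x) x)
    (hF''cont : ContinuousOn F'' {x : ℝ | 0 ≤ x ∧ (x : EReal) < x₀})
    (hF0 : F 0 = 0) (hF'0 : F' 0 = 0)
    (hconv : ∀ x : ℝ, 0 ≤ x → (x : EReal) < x₀ → 0 ≤ F'' x)
    (v : ℝ → ℝ) (hv : ∀ x, v x = ∫ τ in (0 : ℝ)..x, 2 * τ * Real.sqrt (1 + F' τ ^ 2)) :
    ∀ m : ℕ, 1 ≤ m → ∀ x : ℝ, 0 < x → (x : EReal) < x₀ →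
      (∫ τ in (0 : ℝ)..x,
          F' τ * F'' τ / (1 + F' τ ^ 2) ^ ((3 : ℝ) / 2) * v τ ^ m) ≤ v x ^ m :=
  stmt12_general x₀ F' F'' hF'' hF'0 hconv v hv
end

section
/- Let g : [0,∞) → [1,∞) be a continuous nondecreasing function, and suppose there exist constants c > 0, C₆ > 0 and α > 0 such that exp(2 ∫_c^x (g(τ)/τ) dτ) ≤ C₆ (∫₀^x g(τ) dτ)^α for all x ≥ c. Then g is bounded on [0,∞). -/
open MeasureTheory Filter Set

/-- If `g : [0,∞) → [1,∞)` is continuous and nondecreasing, and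
`exp(2∫_c^x g(τ)/τ dτ) ≤ C₆ (∫₀^x g)^α` for all `x ≥ c`, with `c, C₆, α > 0`, then `g` is
bounded on `[0,∞)`. -/
theorem stmt13 (g : ℝ → ℝ) (hg : ContinuousOn g (Ici 0))
    (hmono : MonotoneOn g (Ici 0)) (hge : ∀ x ≥ (0 : ℝ), 1 ≤ g x)
    (c C₆ α : ℝ) (hc : 0 < c) (hC₆ : 0 < C₆) (hα : 0 < α)
    (hineq : ∀ x ≥ c,
      Real.exp (2 * ∫ τ in c..x, g τ / τ) ≤ C₆ * (∫ τ in (0 : ℝ)..x, g τ) ^ α) :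
    ∃ M : ℝ, ∀ x ≥ (0 : ℝ), g x ≤ M := by
  by_contra hM
  push_neg at hM
  set K : ℝ := C₆ ^ (-α⁻¹) with hKdef
  have hK : 0 < K := Real.rpow_pos_of_pos hC₆ _
  -- continuity / integrability facts
  have hfc : ContinuousOn (fun τ : ℝ => g τ / τ) (Ioi 0) :=
    (hg.mono Ioi_subset_Ici_self).div continuous_id.continuousOn
      (fun τ hτ => ne_of_gt hτ)
  have hfint : ∀ a b : ℝ, 0 < a → 0 < b →
      IntervalIntegrable (fun τ : ℝ => g τ / τ) volume a b := by
    intro a b ha hb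
    apply (hfc.mono ?_).intervalIntegrable
    intro t ht
    exact lt_of_lt_of_le (lt_min ha hb) ht.1
  have hgint : ∀ a b : ℝ, 0 ≤ a → 0 ≤ b → IntervalIntegrable g volume a b := by
    intro a b ha hb
    apply (hg.mono ?_).intervalIntegrable
    intro t ht
    exact le_trans (le_min ha hb) ht.1
  -- the primitive is bounded above by x * g x
  have hI_nonneg : ∀ x, 0 ≤ x → 0 ≤ ∫ τ in (0:ℝ)..x, g τ := by
    intro x hx
    apply intervalIntegral.integral_nonneg hx
    intro u hu
    exact le_trans zero_le_one (hge u hu.1)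
  have hI_le : ∀ x, 0 ≤ x → (∫ τ in (0:ℝ)..x, g τ) ≤ x * g x := by
    intro x hx
    have h1 : (∫ τ in (0:ℝ)..x, g τ) ≤ ∫ _ in (0:ℝ)..x, g x :=
      intervalIntegral.integral_mono_on hx (hgint 0 x le_rfl hx)
        intervalIntegrable_const (fun τ hτ => hmono hτ.1 hx hτ.2)
    simpa using h1
  -- key lower bound on g coming from the hypothesis
  have hg_lower : ∀ x, c ≤ x →
      K * Real.exp (2 * (∫ τ in c..x, g τ / τ) * α⁻¹) ≤ x * g x := by
    intro x hx
    have hx0 : (0:ℝ) ≤ x := le_trans hc.le hx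
    have hI0 : 0 ≤ ∫ τ in (0:ℝ)..x, g τ := hI_nonneg x hx0
    have h1 : Real.exp (2 * ∫ τ in c..x, g τ / τ) ^ (α⁻¹)
        ≤ (C₆ * (∫ τ in (0:ℝ)..x, g τ) ^ α) ^ α⁻¹ :=
      Real.rpow_le_rpow (Real.exp_pos _).le (hineq x hx) (inv_nonneg.mpr hα.le)
    have h2 : (C₆ * (∫ τ in (0:ℝ)..x, g τ) ^ α) ^ α⁻¹
        = C₆ ^ α⁻¹ * ∫ τ in (0:ℝ)..x, g τ := by
      rw [Real.mul_rpow hC₆.le (Real.rpow_nonneg hI0 _), ← Real.rpow_mul hI0,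
        mul_inv_cancel₀ hα.ne', Real.rpow_one]
    calc K * Real.exp (2 * (∫ τ in c..x, g τ / τ) * α⁻¹)
        = K * Real.exp (2 * ∫ τ in c..x, g τ / τ) ^ (α⁻¹) := by rw [Real.exp_mul]
      _ ≤ K * (C₆ ^ α⁻¹ * ∫ τ in (0:ℝ)..x, g τ) := by
          rw [← h2]; exact mul_le_mul_of_nonneg_left h1 hK.le
      _ = (∫ τ in (0:ℝ)..x, g τ) := by
          rw [hKdef, ← mul_assoc, ← Real.rpow_add hC₆,
            show -α⁻¹ + α⁻¹ = 0 by ring, Real.rpow_zero, one_mul]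
      _ ≤ x * g x := hI_le x hx0
  -- derivative of the comparison function
  have hψd : ∀ x : ℝ, 0 < x →
      HasDerivAt (fun u : ℝ =>
          Real.exp (-(2*α⁻¹) * ∫ τ in c..u, g τ / τ) - 2*K*α⁻¹ * u⁻¹)
        (Real.exp (-(2*α⁻¹) * ∫ τ in c..x, g τ / τ) * (-(2*α⁻¹) * (g x / x))
          - 2*K*α⁻¹ * (-(x^2)⁻¹)) x := by
    intro x hx
    have h1 : HasDerivAt (fun u : ℝ => ∫ τ in c..u, g τ / τ) (g x / x) x :=
      intervalIntegral.integral_hasDerivAt_right (hfint c x hc hx)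
        (hfc.stronglyMeasurableAtFilter isOpen_Ioi x hx)
        (hfc.continuousAt (Ioi_mem_nhds hx))
    exact ((h1.const_mul (-(2*α⁻¹))).exp).sub
      ((hasDerivAt_inv (ne_of_gt hx)).const_mul (2*K*α⁻¹))
  -- the derivative is nonpositive for x ≥ c
  have hd_nonpos : ∀ x, c ≤ x →
      Real.exp (-(2*α⁻¹) * ∫ τ in c..x, g τ / τ) * (-(2*α⁻¹) * (g x / x))
        - 2*K*α⁻¹ * (-(x^2)⁻¹) ≤ 0 := by
    intro x hx
    have hx0 : 0 < x := lt_of_lt_of_le hc hx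
    have h2 := hg_lower x hx
    have e1 : Real.exp (2 * (∫ τ in c..x, g τ / τ) * α⁻¹)
        * Real.exp (-(2*α⁻¹) * ∫ τ in c..x, g τ / τ) = 1 := by
      rw [← Real.exp_add,
        show 2 * (∫ τ in c..x, g τ / τ) * α⁻¹
          + -(2*α⁻¹) * ∫ τ in c..x, g τ / τ = 0 by ring, Real.exp_zero]
    set E : ℝ := Real.exp (-(2*α⁻¹) * ∫ τ in c..x, g τ / τ) with hEdef
    have hE : 0 < E := Real.exp_pos _
    have key : K ≤ E * g x * x := by
      calc K = K * (Real.exp (2 * (∫ τ in c..x, g τ / τ) * α⁻¹) * E) := by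
              rw [e1, mul_one]
        _ = K * Real.exp (2 * (∫ τ in c..x, g τ / τ) * α⁻¹) * E := by ring
        _ ≤ x * g x * E := mul_le_mul_of_nonneg_right h2 hE.le
        _ = E * g x * x := by ring
    have h3 : K * (x^2)⁻¹ ≤ E * (g x / x) := by
      have h4 : K * (x^2)⁻¹ ≤ (E * g x * x) * (x^2)⁻¹ :=
        mul_le_mul_of_nonneg_right key (by positivity)
      have h5 : (E * g x * x) * (x^2)⁻¹ = E * (g x / x) := by
        field_simp
      linarith [h4, h5.le, h5.ge]
    have e2 : E * (-(2*α⁻¹) * (g x / x)) - 2*K*α⁻¹ * (-(x^2)⁻¹)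
        = 2*α⁻¹ * (K * (x^2)⁻¹) - 2*α⁻¹ * (E * (g x / x)) := by ring
    rw [e2]
    have h6 : 2*α⁻¹ * (K * (x^2)⁻¹) ≤ 2*α⁻¹ * (E * (g x / x)) :=
      mul_le_mul_of_nonneg_left h3 (by positivity)
    linarith
  -- produce a big point T with g T ≥ α
  obtain ⟨T₀, hT₀0, hT₀⟩ := hM α
  set T : ℝ := max T₀ c + 1 with hTdef
  have hTc : c < T := lt_of_le_of_lt (le_max_right _ _) (lt_add_one _)
  have hT0 : 0 < T := hc.trans hTc
  have hT₀T : T₀ ≤ T := le_trans (le_max_left _ _) (le_of_lt (lt_add_one _))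
  have hgT : α ≤ g T := le_trans hT₀.le (hmono hT₀0 hT0.le hT₀T)
  set X : ℝ := max T (α * T^2 / K + 1) with hXdef
  have hXT : T ≤ X := le_max_left _ _
  have hXc : c < X := hTc.trans_le hXT
  have hX0 : 0 < X := hc.trans hXc
  have hXbig : α * T^2 / K + 1 ≤ X := le_max_right _ _
  -- lower bound on ∫_c^X g/τ
  have hJX_lb : α * Real.log (X / T) ≤ ∫ τ in c..X, g τ / τ := by
    have hsplit : (∫ τ in c..T, g τ / τ) + ∫ τ in T..X, g τ / τ
        = ∫ τ in c..X, g τ / τ :=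
      intervalIntegral.integral_add_adjacent_intervals
        (hfint c T hc hT0) (hfint T X hT0 hX0)
    have h1 : 0 ≤ ∫ τ in c..T, g τ / τ := by
      apply intervalIntegral.integral_nonneg hTc.le
      intro u hu
      have hu0 : (0:ℝ) ≤ u := le_trans hc.le hu.1
      exact div_nonneg (le_trans zero_le_one (hge u hu0)) hu0
    have h2 : (∫ τ in T..X, α * τ⁻¹) ≤ ∫ τ in T..X, g τ / τ := by
      apply intervalIntegral.integral_mono_on hXT ?_ (hfint T X hT0 hX0)
      · intro τ hτ
        have hτ0 : 0 < τ := lt_of_lt_of_le hT0 hτ.1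
        rw [div_eq_mul_inv]
        exact mul_le_mul_of_nonneg_right
          (le_trans hgT (hmono hT0.le hτ0.le hτ.1)) (inv_nonneg.mpr hτ0.le)
      · apply ContinuousOn.intervalIntegrable
        apply continuousOn_const.mul
        apply ContinuousOn.inv₀ continuous_id.continuousOn
        intro t ht
        exact ne_of_gt (lt_of_lt_of_le (lt_min hT0 hX0) ht.1)
    have h3 : (∫ τ in T..X, α * τ⁻¹) = α * Real.log (X / T) := by
      rw [intervalIntegral.integral_const_mul]
      open intervalIntegral in rw [integral_inv (notMem_uIcc_of_lt hT0 hX0)]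
    linarith
  -- upper bound on the exponential at X
  have hφX : Real.exp (-(2*α⁻¹) * ∫ τ in c..X, g τ / τ) ≤ T^2 * (X^2)⁻¹ := by
    have hr : 0 < X / T := div_pos hX0 hT0
    have hαinv : α⁻¹ * α = 1 := inv_mul_cancel₀ hα.ne'
    have hnp : -(2*α⁻¹) ≤ (0:ℝ) := by
      have : 0 < 2*α⁻¹ := by positivity
      linarith
    have h1 : -(2*α⁻¹) * (∫ τ in c..X, g τ / τ)
        ≤ -(2*α⁻¹) * (α * Real.log (X / T)) :=
      mul_le_mul_of_nonpos_left hJX_lb hnp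
    calc Real.exp (-(2*α⁻¹) * ∫ τ in c..X, g τ / τ)
        ≤ Real.exp (-(2*α⁻¹) * (α * Real.log (X / T))) := Real.exp_le_exp.mpr h1
      _ = (T / X)^2 := by
          rw [show -(2*α⁻¹) * (α * Real.log (X / T))
              = -Real.log (X / T) + -Real.log (X / T) by
            linear_combination (-2 * Real.log (X / T)) * hαinv]
          rw [Real.exp_add, Real.exp_neg, Real.exp_log hr, inv_div]
          ring
      _ = T^2 * (X^2)⁻¹ := by rw [div_pow, div_eq_mul_inv]
  -- antitonicity of the comparison function on [X, ∞)
  have hanti : AntitoneOn (fun u : ℝ =>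
      Real.exp (-(2*α⁻¹) * ∫ τ in c..u, g τ / τ) - 2*K*α⁻¹ * u⁻¹) (Ici X) := by
    apply antitoneOn_of_deriv_nonpos (convex_Ici X)
    · intro x hx
      exact ((hψd x (hc.trans (hXc.trans_le hx))).continuousAt).continuousWithinAt
    · intro x hx
      rw [interior_Ici] at hx
      exact (hψd x (hc.trans (hXc.trans hx))).differentiableAt.differentiableWithinAt
    · intro x hx
      rw [interior_Ici] at hx
      rw [(hψd x (hc.trans (hXc.trans hx))).deriv]
      exact hd_nonpos x (le_of_lt (hXc.trans hx))
  have h2X : (Real.exp (-(2*α⁻¹) * ∫ τ in c..(2*X), g τ / τ) - 2*K*α⁻¹ * (2*X)⁻¹)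
      ≤ Real.exp (-(2*α⁻¹) * ∫ τ in c..X, g τ / τ) - 2*K*α⁻¹ * X⁻¹ :=
    hanti (self_mem_Ici) (by simp only [mem_Ici]; linarith) (by linarith)
  have hE2X : 0 < Real.exp (-(2*α⁻¹) * ∫ τ in c..(2*X), g τ / τ) := Real.exp_pos _
  have hinv2X : 2*K*α⁻¹ * X⁻¹ - 2*K*α⁻¹ * (2*X)⁻¹ = K * α⁻¹ * X⁻¹ := by
    field_simp
    ring
  have hfin : K * α⁻¹ * X⁻¹ < T^2 * (X^2)⁻¹ := by
    have : K * α⁻¹ * X⁻¹ < Real.exp (-(2*α⁻¹) * ∫ τ in c..X, g τ / τ) := by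
      linarith
    linarith [hφX]
  -- derive contradiction
  have hmul := mul_lt_mul_of_pos_right hfin (show (0:ℝ) < α * X^2 by positivity)
  have e5 : K * α⁻¹ * X⁻¹ * (α * X^2) = K * X := by
    field_simp
  have e6 : T^2 * (X^2)⁻¹ * (α * X^2) = α * T^2 := by
    field_simp
  rw [e5, e6] at hmul
  have e7 : α * T^2 + K ≤ K * X := by
    calc α * T^2 + K = K * (α * T^2 / K + 1) := by field_simp
      _ ≤ K * X := mul_le_mul_of_nonneg_left hXbig hK.le
  linarith
end
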